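/- arXiv:1312.4306 — 10 statements merged into one kernel-verified Lean document; each statement's English description precedes it below -/
import Mathlib

section
/- Let n ≥ 4 and let (A_k)_{k∈ℤ} be an n-periodic sequence of points in the plane such that for all p ∈ [0, n-1] and all q ∈ [1, n-1] \ {p, p+1}, det(A_{p+1} - A_p, A_q - A_p) > 0 (a convex polygonal direct, CPD, with n vertices). Then the sequence (B_k) defined by B_k = A_{k+1} for 0 ≤ k ≤ n-2, extended (n-1)-periodically, is a CPD with n-1 vertices. -/
noncomputable section

/-- Determinant of two vectors of the plane in the canonical basis. -/
def det2 (v w : ℝ × ℝ) : ℝ := v.1 * w.2 - v.2 * w.1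

/-- Convex polygonal direct (CPD) with `n` vertices: an `n`-periodic sequence of
points of the plane such that every vertex `A q`, `q ∈ [1, n-1] \ {p, p+1}`, is
strictly on the positive side of the oriented edge `(A p, A (p+1))`. -/
def IsCPD (n : ℕ) (A : ℤ → ℝ × ℝ) : Prop :=
  3 ≤ n ∧ (∀ k : ℤ, A (k + n) = A k) ∧
  ∀ p q : ℤ, 0 ≤ p → p ≤ (n : ℤ) - 1 → 1 ≤ q → q ≤ (n : ℤ) - 1 →
    q ≠ p → q ≠ p + 1 → 0 < det2 (A (p + 1) - A p) (A q - A p)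

/-- First closed quadrant. -/
def Q1 (v : ℝ × ℝ) : Prop := 0 ≤ v.1 ∧ 0 ≤ v.2
/-- Second closed quadrant. -/
def Q2 (v : ℝ × ℝ) : Prop := v.1 ≤ 0 ∧ 0 ≤ v.2
/-- Third closed quadrant. -/
def Q3 (v : ℝ × ℝ) : Prop := v.1 ≤ 0 ∧ v.2 ≤ 0
/-- Fourth closed quadrant. -/
def Q4 (v : ℝ × ℝ) : Prop := 0 ≤ v.1 ∧ v.2 ≤ 0

/-- Two vectors lie in the same closed quadrant. -/
def SameQuadrant (v w : ℝ × ℝ) : Prop :=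
  (Q1 v ∧ Q1 w) ∨ (Q2 v ∧ Q2 w) ∨ (Q3 v ∧ Q3 w) ∨ (Q4 v ∧ Q4 w)

/-- The unit square `[0,1]²`. -/
def unitSquare : Set (ℝ × ℝ) := Set.Icc ((0, 0) : ℝ × ℝ) (1, 1)

/-- Membership in the family `D_{m,n}` of Farey lines: lines meeting the unit
square with an integer equation `u x + v y = w`, `|u| ≤ m`, `|v| ≤ n`,
`(u, v) ≠ (0, 0)`. -/
def IsFareyLine (m n : ℕ) (L : Set (ℝ × ℝ)) : Prop :=
  (L ∩ unitSquare).Nonempty ∧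
  ∃ u v w : ℤ, |u| ≤ (m : ℤ) ∧ |v| ≤ (n : ℤ) ∧ (u, v) ≠ (0, 0) ∧
    L = {p : ℝ × ℝ | (u : ℝ) * p.1 + (v : ℝ) * p.2 = (w : ℝ)}

/-- The Farey complex `CF(m,n)`: the complement in the unit square of the union
of the lines of `D_{m,n}`. -/
def FareyComplex (m n : ℕ) : Set (ℝ × ℝ) :=
  {p ∈ unitSquare | ∀ L, IsFareyLine m n L → p ∉ L}

/-- The closed polygonal line associated with a `p`-periodic sequence of points. -/
def Polyline (p : ℕ) (A : ℤ → ℝ × ℝ) : Set (ℝ × ℝ) :=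
  ⋃ k ∈ Finset.range p, segment ℝ (A k) (A (k + 1))

/-!
Removing `A 0` keeps every edge `A (p+1) A (p+2)` of the old polygon and replaces the two edges
through `A 0` by the chord `A (n-1) A 1`, so only the chord has to be checked. That
`A (n-2), …, A 2` lie to its left follows by descending induction: if `A (j+1)` is to the left of
the chord, a Plücker identity among the five points `A (n-1), A 0, A 1, A j, A (j+1)` transfers
this to `A j`.
-/

/-- Positive iff `c` lies strictly to the left of the oriented line `a → b`. -/
def orient (a b c : ℝ × ℝ) : ℝ := det2 (b - a) (c - a)

theorem orient_rotate (a b c : ℝ × ℝ) : orient a b c = orient b c a := by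
  simp only [orient, det2, Prod.fst_sub, Prod.snd_sub]
  ring

theorem orient_pos_of_edge_left {a o b c d : ℝ × ℝ} (haob : 0 < orient a o b)
    (hobc : 0 < orient o b c) (hobd : 0 < orient o b d) (hcdb : 0 < orient c d b)
    (habd : 0 < orient a b d) : 0 < orient a b c := by
  have plucker : orient a b c * orient o b d =
      orient a o b * orient c d b + orient o b c * orient a b d := by
    simp only [orient, det2, Prod.fst_sub, Prod.snd_sub]
    ring
  have : 0 < orient a b c * orient o b d := by
    rw [plucker]
    positivity
  exact pos_of_mul_pos_left this hobd.le

namespace IsCPD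

variable {n : ℕ} {A : ℤ → ℝ × ℝ}

theorem orient_pos (hA : IsCPD n A) {p q : ℤ} (hp₀ : 0 ≤ p) (hp : p ≤ n - 1) (hq₁ : 1 ≤ q)
    (hq : q ≤ n - 1) (hqp : q ≠ p) (hqp₁ : q ≠ p + 1) : 0 < orient (A p) (A (p + 1)) (A q) :=
  hA.2.2 p q hp₀ hp hq₁ hq hqp hqp₁

theorem orient_chord_pos (hA : IsCPD n A) {j : ℤ} (hj₂ : 2 ≤ j) (hj : j ≤ n - 2) :
    0 < orient (A (n - 1)) (A 1) (A j) := by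
  have hA0 : A n = A 0 := by simpa using hA.2.1 0
  have h_last : 0 < orient (A (n - 1)) (A 0) (A 1) := by
    have h := hA.orient_pos (p := n - 1) (q := 1) (by omega) le_rfl le_rfl (by omega)
      (by omega) (by omega)
    rwa [sub_add_cancel, hA0] at h
  have h_first : ∀ {q : ℤ}, 2 ≤ q → q ≤ n - 1 → 0 < orient (A 0) (A 1) (A q) := fun hq₂ hq =>
    hA.orient_pos (p := 0) (by omega) (by omega) (by omega) hq (by omega) (by omega)
  induction j, hj using Int.leInductionDown with
  | base =>
    have h := hA.orient_pos (p := n - 2) (q := 1) (by omega) (by omega) le_rfl (by omega)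
      (by omega) (by omega)
    rwa [show (n : ℤ) - 2 + 1 = n - 1 by ring, orient_rotate] at h
  | pred j hj ih =>
    have h_edge := hA.orient_pos (p := j - 1) (q := 1) (by omega) (by omega) le_rfl (by omega)
      (by omega) (by omega)
    rw [sub_add_cancel] at h_edge
    exact orient_pos_of_edge_left h_last (h_first (by omega) (by omega))
      (h_first (by omega) (by omega)) h_edge (ih (by omega))

end IsCPD

/-- Reduction of a CPD: deleting the vertex `A 0` of a CPD with `n ≥ 4`
vertices yields a CPD with `n - 1` vertices. -/
theorem reduction_of_CPD (n : ℕ) (hn : 4 ≤ n) (A B : ℤ → ℝ × ℝ)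
    (hA : IsCPD n A)
    (hB : ∀ k : ℤ, 0 ≤ k → k ≤ (n : ℤ) - 2 → B k = A (k + 1))
    (hBper : ∀ k : ℤ, B (k + ((n : ℤ) - 1)) = B k) :
    IsCPD (n - 1) B := by
  have hcast : ((n - 1 : ℕ) : ℤ) = n - 1 := by omega
  have hB_wrap : B (n - 2 + 1) = A 1 := by
    rw [show (n : ℤ) - 2 + 1 = 0 + (n - 1) by ring, hBper, hB 0 le_rfl (by omega), zero_add]
  refine ⟨by omega, fun k => by rw [hcast]; exact hBper k, ?_⟩
  intro p q hp₀ hp hq₁ hq hqp hqp₁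
  rw [hcast] at hp hq
  change 0 < orient (B p) (B (p + 1)) (B q)
  rw [hB p hp₀ (by omega), hB q (by omega) (by omega)]
  obtain hp' | rfl : p ≤ n - 3 ∨ p = n - 2 := by omega
  · rw [hB (p + 1) (by omega) (by omega)]
    exact hA.orient_pos (by omega) (by omega) (by omega) (by omega) (by omega) (by omega)
  · rw [hB_wrap, show (n : ℤ) - 2 + 1 = n - 1 by ring]
    exact hA.orient_chord_pos (by omega) (by omega)
end
end

section
/- Let (A_k) be a CPD with n ≥ 5 vertices such that no two consecutive edge vectors A_k - A_{k-1} and A_{k+1} - A_k lie in the same (closed) quadrant. Suppose A_1 - A_0 lies in the first quadrant Q_1 = {(x,y) : x ≥ 0, y ≥ 0}, and let q with 2 ≤ q ≤ n-2 be such that A_{q+1} - A_q also lies in Q_1. Then the vector A_q - A_1 does not lie in Q_1. -/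
/-!
Write `a = A 1 - A 0`, `e = A 2 - A 1` and `v = A q - A 1`. For `q = 2`, `v = e`. Otherwise convexity
makes `e` turn left from `a` and `v` turn left from both `a` and `e`, so `e` lies in the cone spanned
by `a` and `v`. If `a` and `v` were both in `Q1`, so would be `e`, against the hypothesis on the
consecutive edges `a`, `e`.
-/

noncomputable section

theorem det2_sub_sub (a b c : ℝ × ℝ) : det2 (b - a) (c - b) = det2 (b - a) (c - a) := by
  simp only [det2, Prod.fst_sub, Prod.snd_sub]
  ring

theorem det2_smul_eq (a e v : ℝ × ℝ) : det2 a v • e = det2 e v • a + det2 a e • v := by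
  ext <;> simp only [det2, Prod.smul_fst, Prod.smul_snd, Prod.fst_add, Prod.snd_add,
    smul_eq_mul] <;> ring

theorem Q1_of_det2_nonneg {a e v : ℝ × ℝ} (ha : Q1 a) (hv : Q1 v) (hav : 0 < det2 a v)
    (hae : 0 ≤ det2 a e) (hev : 0 ≤ det2 e v) : Q1 e := by
  have key := det2_smul_eq a e v
  have h1 := congrArg Prod.fst key
  have h2 := congrArg Prod.snd key
  simp only [Prod.smul_fst, Prod.smul_snd, Prod.fst_add, Prod.snd_add, smul_eq_mul] at h1 h2
  constructor
  · refine nonneg_of_mul_nonneg_right ?_ hav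
    rw [h1]
    exact add_nonneg (mul_nonneg hev ha.1) (mul_nonneg hae hv.1)
  · refine nonneg_of_mul_nonneg_right ?_ hav
    rw [h2]
    exact add_nonneg (mul_nonneg hev ha.2) (mul_nonneg hae hv.2)

theorem not_same_quadrant_diagonal_general (n : ℕ) (A : ℤ → ℝ × ℝ)
    (hA : IsCPD n A)
    (hcons : ∀ k : ℤ, ¬ SameQuadrant (A k - A (k - 1)) (A (k + 1) - A k))
    (h0 : Q1 (A 1 - A 0))
    (q : ℤ) (hq2 : 2 ≤ q) (hqn : q ≤ (n : ℤ) - 2) :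
    ¬ Q1 (A q - A 1) := by
  intro hv
  obtain ⟨-, -, hleft⟩ := hA
  have he : ¬ Q1 (A 2 - A 1) := fun he => hcons 1 (Or.inl ⟨by simpa using h0, by simpa using he⟩)
  rcases hq2.eq_or_lt with rfl | hq3
  · exact he hv
  have hav := hleft 0 q le_rfl (by omega) (by omega) (by omega) (by omega) (by omega)
  have hae := hleft 0 2 le_rfl (by omega) (by omega) (by omega) (by omega) (by omega)
  have hev := hleft 1 q (by omega) (by omega) (by omega) (by omega) (by omega) (by omega)
  norm_num at hav hae hev
  rw [← det2_sub_sub] at hav hae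
  exact he (Q1_of_det2_nonneg h0 hv hav hae.le hev.le)

/-- Second key lemma: if no two consecutive edge vectors of a CPD with `n ≥ 5`
vertices lie in the same closed quadrant, `A 1 - A 0 ∈ Q1` and
`A (q+1) - A q ∈ Q1` for some `2 ≤ q ≤ n - 2`, then `A q - A 1 ∉ Q1`. -/
theorem not_same_quadrant_diagonal (n : ℕ) (hn : 5 ≤ n) (A : ℤ → ℝ × ℝ)
    (hA : IsCPD n A)
    (hcons : ∀ k : ℤ, ¬ SameQuadrant (A k - A (k - 1)) (A (k + 1) - A k))
    (h0 : Q1 (A 1 - A 0))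
    (q : ℤ) (hq2 : 2 ≤ q) (hqn : q ≤ (n : ℤ) - 2)
    (hq : Q1 (A (q + 1) - A q)) :
    ¬ Q1 (A q - A 1) :=
  not_same_quadrant_diagonal_general n A hA hcons h0 q hq2 hqn
end
end

section
/- Let (A_0, A_1, A_2, A_3) be a CPD with 4 vertices (a convex quadrilateral with positively oriented boundary) such that no two consecutive edge vectors A_k - A_{k-1} and A_{k+1} - A_k (indices mod 4) lie in the same closed quadrant. Then the opposite edge vectors A_1 - A_0 and A_3 - A_2 do not lie in the same closed quadrant, and likewise A_2 - A_1 and A_0 - A_3 do not lie in the same closed quadrant. -/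
/-!
Cramer's rule `det2 a c • b = det2 b c • a + det2 a b • c` shows that if `a` and `c` lie in a
common closed quadrant, `det2 a b > 0`, `det2 b c > 0` and `det2 a c ≥ 0`, then `b` lies in that
quadrant as well. For the edge vectors `a, b, c, d` of a convex quadrilateral all consecutive
determinants are positive, so if the opposite edges `a` and `c` shared a quadrant, then `b`
(when `det2 a c ≥ 0`) or `d` (when `det2 c a ≥ 0`) would share it with its neighbours.
Quarter-turn rotations preserve `det2` and permute the quadrants, so it suffices to treat `Q1`.
-/

noncomputable section

lemma det2_sub_sub_sub_left (p q r : ℝ × ℝ) :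
    det2 (q - p) (r - q) = det2 (q - p) (r - p) := by
  simp only [det2, Prod.fst_sub, Prod.snd_sub]
  ring

lemma det2_sub_sub_sub_right (p q r : ℝ × ℝ) :
    det2 (q - p) (r - q) = det2 (r - q) (p - q) := by
  simp only [det2, Prod.fst_sub, Prod.snd_sub]
  ring

lemma det2_smul_eq_add (a b c : ℝ × ℝ) : det2 a c • b = det2 b c • a + det2 a b • c := by
  ext <;> simp only [det2, Prod.smul_fst, Prod.smul_snd, Prod.fst_add, Prod.snd_add,
    smul_eq_mul] <;> ring

lemma Q1_of_det2_pos {a b c : ℝ × ℝ} (ha : Q1 a) (hc : Q1 c) (hab : 0 < det2 a b)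
    (hbc : 0 < det2 b c) (hac : 0 ≤ det2 a c) : Q1 b := by
  have h₁ : det2 a c * b.1 = det2 b c * a.1 + det2 a b * c.1 :=
    congrArg Prod.fst (det2_smul_eq_add a b c)
  have h₂ : det2 a c * b.2 = det2 b c * a.2 + det2 a b * c.2 :=
    congrArg Prod.snd (det2_smul_eq_add a b c)
  obtain ⟨ha₁, ha₂⟩ := ha
  obtain ⟨hc₁, hc₂⟩ := hc
  rcases hac.lt_or_eq with hac | hac
  · exact ⟨by nlinarith, by nlinarith⟩
  · -- `a` and `c` would point in opposite directions, so `a = 0`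
    rw [← hac, zero_mul] at h₁ h₂
    have ha₁' := (mul_eq_zero.1 ((add_eq_zero_iff_of_nonneg (mul_nonneg hbc.le ha₁)
      (mul_nonneg hab.le hc₁)).1 h₁.symm).1).resolve_left hbc.ne'
    have ha₂' := (mul_eq_zero.1 ((add_eq_zero_iff_of_nonneg (mul_nonneg hbc.le ha₂)
      (mul_nonneg hab.le hc₂)).1 h₂.symm).1).resolve_left hbc.ne'
    simp [det2, ha₁', ha₂'] at hab

lemma not_Q1_and_Q1_of_det2_pos {a b c d : ℝ × ℝ} (hab : 0 < det2 a b) (hbc : 0 < det2 b c)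
    (hcd : 0 < det2 c d) (hda : 0 < det2 d a) (hb : ¬ Q1 b) (hd : ¬ Q1 d) :
    ¬ (Q1 a ∧ Q1 c) := by
  rintro ⟨ha, hc⟩
  rcases le_total 0 (det2 a c) with hac | hca
  · exact hb (Q1_of_det2_pos ha hc hab hbc hac)
  · refine hd (Q1_of_det2_pos hc ha hcd hda ?_)
    simp only [det2] at hca ⊢
    linarith

/-- Rotation by a quarter turn, mapping `Q1 → Q2 → Q3 → Q4 → Q1`. -/
def rotLeft (v : ℝ × ℝ) : ℝ × ℝ := (-v.2, v.1)

lemma det2_rotLeft (v w : ℝ × ℝ) : det2 (rotLeft v) (rotLeft w) = det2 v w := by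
  simp only [det2, rotLeft]
  ring

lemma sameQuadrant_rotLeft {v w : ℝ × ℝ} :
    SameQuadrant (rotLeft v) (rotLeft w) ↔ SameQuadrant v w := by
  simp only [SameQuadrant, Q1, Q2, Q3, Q4, rotLeft, neg_nonneg, neg_nonpos]
  tauto

lemma det2_iterate_rotLeft (n : ℕ) (v w : ℝ × ℝ) :
    det2 (rotLeft^[n] v) (rotLeft^[n] w) = det2 v w := by
  induction n with
  | zero => rfl
  | succ n ih => rw [Function.iterate_succ_apply', Function.iterate_succ_apply', det2_rotLeft, ih]

lemma sameQuadrant_iterate_rotLeft (n : ℕ) {v w : ℝ × ℝ} :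
    SameQuadrant (rotLeft^[n] v) (rotLeft^[n] w) ↔ SameQuadrant v w := by
  induction n with
  | zero => rfl
  | succ n ih =>
    rw [Function.iterate_succ_apply', Function.iterate_succ_apply', sameQuadrant_rotLeft, ih]

lemma exists_Q1_iterate_rotLeft {v w : ℝ × ℝ} (h : SameQuadrant v w) :
    ∃ n : ℕ, Q1 (rotLeft^[n] v) ∧ Q1 (rotLeft^[n] w) := by
  rcases h with h | h | h | h
  · exact ⟨0, h⟩
  · refine ⟨3, ?_⟩
    simp only [Q1, Q2, Function.iterate_succ_apply', Function.iterate_zero_apply, rotLeft,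
      neg_neg, neg_nonneg] at h ⊢
    tauto
  · refine ⟨2, ?_⟩
    simp only [Q1, Q3, Function.iterate_succ_apply', Function.iterate_zero_apply, rotLeft,
      neg_nonneg] at h ⊢
    tauto
  · refine ⟨1, ?_⟩
    simp only [Q1, Q4, Function.iterate_one, rotLeft, neg_nonneg] at h ⊢
    tauto

lemma not_sameQuadrant_of_det2_pos {a b c d : ℝ × ℝ} (hab : 0 < det2 a b)
    (hbc : 0 < det2 b c) (hcd : 0 < det2 c d) (hda : 0 < det2 d a)
    (nab : ¬ SameQuadrant a b) (ncd : ¬ SameQuadrant c d) : ¬ SameQuadrant a c := by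
  intro hac
  obtain ⟨n, hn⟩ := exists_Q1_iterate_rotLeft hac
  have hb : ¬ Q1 (rotLeft^[n] b) := fun hb =>
    nab ((sameQuadrant_iterate_rotLeft n).1 (Or.inl ⟨hn.1, hb⟩))
  have hd : ¬ Q1 (rotLeft^[n] d) := fun hd =>
    ncd ((sameQuadrant_iterate_rotLeft n).1 (Or.inl ⟨hn.2, hd⟩))
  rw [← det2_iterate_rotLeft n] at hab hbc hcd hda
  exact not_Q1_and_Q1_of_det2_pos hab hbc hcd hda hb hd hn

/-- Third key lemma: in a CPD with 4 vertices in which no two consecutive edge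
vectors lie in the same closed quadrant, the opposite edge vectors never lie in
the same closed quadrant either. -/
theorem quadrilateral_opposite_edges (A : ℤ → ℝ × ℝ) (hA : IsCPD 4 A)
    (hcons : ∀ k : ℤ, ¬ SameQuadrant (A k - A (k - 1)) (A (k + 1) - A k)) :
    ¬ SameQuadrant (A 1 - A 0) (A 3 - A 2) ∧
    ¬ SameQuadrant (A 2 - A 1) (A 0 - A 3) := by
  obtain ⟨-, hper, H⟩ := hA
  have hA4 : A 4 = A 0 := by simpa using hper 0
  have hAm1 : A (-1) = A 3 := by simpa using (hper (-1)).symm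
  have H' (p q : ℤ) (hp : 0 ≤ p ∧ p ≤ 3) (hq : 1 ≤ q ∧ q ≤ 3) (hqp : q ≠ p ∧ q ≠ p + 1) :
      0 < det2 (A (p + 1) - A p) (A q - A p) :=
    H p q hp.1 hp.2 hq.1 hq.2 hqp.1 hqp.2
  have d01 := H' 0 2 (by norm_num) (by norm_num) (by norm_num)
  have d12 := H' 1 3 (by norm_num) (by norm_num) (by norm_num)
  have d23 := H' 3 2 (by norm_num) (by norm_num) (by norm_num)
  have d30 := H' 3 1 (by norm_num) (by norm_num) (by norm_num)
  have n01 := hcons 1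
  have n12 := hcons 2
  have n23 := hcons 3
  have n30 := hcons 0
  norm_num at d01 d12 d23 d30 n01 n12 n23 n30
  rw [hA4] at d23 d30 n23
  rw [hAm1] at n30
  rw [← det2_sub_sub_sub_left] at d01 d12 d30
  rw [← det2_sub_sub_sub_right] at d23
  exact ⟨not_sameQuadrant_of_det2_pos d01 d12 d23 d30 n01 n23,
    not_sameQuadrant_of_det2_pos d12 d23 d30 d01 n12 n30⟩
end
end

section
/- Let (A_k)_{k∈ℤ} be a CPD with n vertices such that for all k, the consecutive edge vectors A_k - A_{k-1} and A_{k+1} - A_k do not lie in the same closed quadrant. Then n ≤ 4. -/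
/-! At every vertex of such a CPD the incoming and outgoing edges lie in different closed
quadrants, so one of the four linear forms `x`, `y`, `-x`, `-y` increases along the incoming
edge and decreases along the outgoing one: the vertex is a strict peak of that form. On a convex
polygon a linear form has at most one strict peak, so five vertices cannot all be peaks of four
forms. -/

noncomputable section

theorem det2_smul_eq_add_s5 (u v w : ℝ × ℝ) : det2 u v • w = det2 w v • u + det2 u w • v := by
  ext <;> simp only [det2, Prod.smul_fst, Prod.smul_snd, Prod.fst_add, Prod.snd_add,
    smul_eq_mul] <;> ring

/-- Cramer's rule expresses `M - Q` in the basis `Q - P`, `R - Q` with coefficients whose signs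
are given by the hypotheses. -/
theorem apply_lt_of_peak_of_det2_pos (f : ℝ × ℝ →ₗ[ℝ] ℝ) {P Q R M : ℝ × ℝ}
    (hPQ : f P < f Q) (hRQ : f R < f Q) (hPQR : 0 < det2 (Q - P) (R - P))
    (hPQM : 0 < det2 (Q - P) (M - P)) (hQRM : 0 < det2 (R - Q) (M - Q)) : f M < f Q := by
  have key := congrArg f (det2_smul_eq_add_s5 (Q - P) (R - Q) (M - Q))
  simp only [map_add, map_smul, map_sub, smul_eq_mul] at key
  have hv : det2 (Q - P) (R - Q) = det2 (Q - P) (R - P) := by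
    simp only [det2, Prod.fst_sub, Prod.snd_sub]; ring
  have hm : det2 (Q - P) (M - Q) = det2 (Q - P) (M - P) := by
    simp only [det2, Prod.fst_sub, Prod.snd_sub]; ring
  have hw : det2 (M - Q) (R - Q) = -det2 (R - Q) (M - Q) := by
    simp only [det2]; ring
  rw [hv, hm, hw] at key
  have : det2 (Q - P) (R - P) * (f M - f Q) < 0 := by
    rw [key]; nlinarith [mul_pos hQRM (sub_pos.2 hPQ), mul_pos hPQM (sub_pos.2 hRQ)]
  linarith [neg_of_mul_neg_right this hPQR.le]

def IsPeak (f : ℝ × ℝ →ₗ[ℝ] ℝ) (A : ℤ → ℝ × ℝ) (k : ℤ) : Prop :=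
  f (A (k - 1)) < f (A k) ∧ f (A (k + 1)) < f (A k)

namespace IsCPD

variable {n : ℕ} {A : ℤ → ℝ × ℝ} {f : ℝ × ℝ →ₗ[ℝ] ℝ} {i m : ℤ}

theorem apply_eq_of_dvd (hA : IsCPD n A) {p q : ℤ} (h : (n : ℤ) ∣ p - q) : A p = A q := by
  obtain ⟨j, hj⟩ := h
  have hper : Function.Periodic A (n : ℤ) := hA.2.1
  rw [← hper.sub_int_mul_eq j]
  congr 1
  linear_combination hj

/-- `IsCPD` only tests the vertices `A 1, …, A (n - 1)` against the edges. Going down from the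
edge before `A 0`, each step is a Grassmann–Plücker relation among `A (p - 1), A p, A (p + 1)`,
`A 0` and `A 1`. -/
theorem det2_pos_zero (hA : IsCPD n A) {p : ℤ} (hp1 : 1 ≤ p) (hp2 : p ≤ n - 2) :
    0 < det2 (A (p + 1) - A p) (A 0 - A p) := by
  obtain ⟨hn, hper, hdet⟩ := hA
  induction p, hp2 using Int.leInductionDown with
  | base =>
    have h := hdet (n - 1) (n - 2) (by omega) le_rfl (by omega) (by omega) (by omega) (by omega)
    rw [show (n : ℤ) - 1 + 1 = 0 + n by ring, hper] at h
    rw [show (n : ℤ) - 2 + 1 = n - 1 by ring]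
    convert h using 1
    simp only [det2, Prod.fst_sub, Prod.snd_sub]; ring
  | pred p hp ih =>
    have hbcO := ih (by omega)
    have hbcu := hdet p 1 (by omega) (by omega) le_rfl (by omega) (by omega) (by omega)
    have hOub := hdet 0 p le_rfl (by omega) (by omega) (by omega) (by omega) (by omega)
    have habc := hdet (p - 1) (p + 1) (by omega) (by omega) (by omega) (by omega) (by omega)
      (by omega)
    have habu : 0 ≤ det2 (A p - A (p - 1)) (A 1 - A (p - 1)) := by
      rcases eq_or_lt_of_le hp1 with h | h
      · rw [← h]; simp [det2]
      · simpa using (hdet (p - 1) 1 (by omega) (by omega) le_rfl (by omega) (by omega)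
          (by omega)).le
    rw [sub_add_cancel] at habc ⊢
    rw [zero_add] at hOub
    have plucker : det2 (A (p + 1) - A p) (A 1 - A p) * det2 (A p - A (p - 1)) (A 0 - A (p - 1))
        = det2 (A (p + 1) - A p) (A 0 - A p) * det2 (A p - A (p - 1)) (A 1 - A (p - 1))
          + det2 (A 1 - A 0) (A p - A 0) * det2 (A p - A (p - 1)) (A (p + 1) - A (p - 1)) := by
      simp only [det2, Prod.fst_sub, Prod.snd_sub]; ring
    refine pos_of_mul_pos_right (plucker ▸ ?_) hbcu.le
    exact add_pos_of_nonneg_of_pos (mul_nonneg hbcO.le habu) (mul_pos hOub habc)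

theorem det2_pos (hA : IsCPD n A) {p q : ℤ} (hqp : ¬ (n : ℤ) ∣ q - p)
    (hqp1 : ¬ (n : ℤ) ∣ q - (p + 1)) : 0 < det2 (A (p + 1) - A p) (A q - A p) := by
  have hn : (0 : ℤ) < n := by have := hA.1; omega
  have hp : (n : ℤ) ∣ p - p % n := Int.dvd_self_sub_emod
  have hq : (n : ℤ) ∣ q - q % n := Int.dvd_self_sub_emod
  rw [hA.apply_eq_of_dvd hp, hA.apply_eq_of_dvd hq,
    hA.apply_eq_of_dvd (q := p % n + 1) (by convert hp using 1; ring)]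
  have hp0 := Int.emod_nonneg p hn.ne'
  have hpn := Int.emod_lt_of_pos p hn
  have hq0 := Int.emod_nonneg q hn.ne'
  have hqn := Int.emod_lt_of_pos q hn
  have h0 : q % n ≠ p % n := fun h ↦ hqp <| by
    rw [show q - p = (q - q % n) - (p - p % n) by linear_combination h]; exact dvd_sub hq hp
  have h1 : q % n ≠ p % n + 1 := fun h ↦ hqp1 <| by
    rw [show q - (p + 1) = (q - q % n) - (p - p % n) by linear_combination h]
    exact dvd_sub hq hp
  have h2 : ¬ (q % n = 0 ∧ p % n = n - 1) := fun ⟨h, h'⟩ ↦ hqp1 <| by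
    rw [show q - (p + 1) = (q - q % n) - (p - p % n) - n by linear_combination h - h']
    exact dvd_sub (dvd_sub hq hp) dvd_rfl
  rcases eq_or_lt_of_le hq0 with h | h
  · rw [← h]; exact hA.det2_pos_zero (by omega) (by omega)
  · exact hA.2.2 _ _ hp0 (by omega) (by omega) (by omega) h0 h1

theorem apply_lt_of_isPeak (hA : IsCPD n A) (hi : IsPeak f A i) (h : ¬ (n : ℤ) ∣ m - i)
    (h1 : ¬ (n : ℤ) ∣ m - (i + 1)) (h2 : ¬ (n : ℤ) ∣ m - (i - 1)) : f (A m) < f (A i) := by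
  have hn : (3 : ℤ) ≤ n := by exact_mod_cast hA.1
  have hn2 : ¬ (n : ℤ) ∣ 2 := fun h ↦ by linarith [Int.le_of_dvd two_pos h]
  have hn1 : ¬ (n : ℤ) ∣ 1 := fun h ↦ by linarith [Int.le_of_dvd one_pos h]
  have hturn := hA.det2_pos (p := i - 1) (q := i + 1)
    (by rwa [show i + 1 - (i - 1) = 2 by ring]) (by rwa [show i + 1 - (i - 1 + 1) = 1 by ring])
  have hprev := hA.det2_pos (p := i - 1) (q := m) h2 (by rwa [sub_add_cancel])
  have hnext := hA.det2_pos (p := i) (q := m) h h1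
  rw [sub_add_cancel] at hturn hprev
  exact apply_lt_of_peak_of_det2_pos f hi.1 hi.2 hturn hprev hnext

theorem dvd_sub_of_isPeak (hA : IsCPD n A) (hi : IsPeak f A i) (hm : IsPeak f A m) :
    (n : ℤ) ∣ m - i := by
  by_contra h
  by_cases h1 : (n : ℤ) ∣ m - (i + 1)
  · have hlt := hm.1
    rw [hA.apply_eq_of_dvd h1,
      hA.apply_eq_of_dvd (q := i) (by rw [show m - 1 - i = m - (i + 1) by ring]; exact h1)] at hlt
    exact lt_asymm hi.2 hlt
  by_cases h2 : (n : ℤ) ∣ m - (i - 1)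
  · have hlt := hm.2
    rw [hA.apply_eq_of_dvd h2,
      hA.apply_eq_of_dvd (q := i) (by rw [show m + 1 - i = m - (i - 1) by ring]; exact h2)] at hlt
    exact lt_asymm hi.1 hlt
  have hmi := hA.apply_lt_of_isPeak hi h h1 h2
  have him := hA.apply_lt_of_isPeak (m := i) hm (by rwa [← dvd_neg, neg_sub])
    (by rwa [← dvd_neg, show -(i - (m + 1)) = m - (i - 1) by ring])
    (by rwa [← dvd_neg, show -(i - (m - 1)) = m - (i + 1) by ring])
  exact lt_asymm hmi him

end IsCPD

theorem same_weak_sign_of_imp {a b : ℝ} (hpos : 0 < a → 0 ≤ b) (hneg : a < 0 → b ≤ 0) :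
    (0 ≤ a ∧ 0 ≤ b) ∨ (a ≤ 0 ∧ b ≤ 0) := by
  rcases lt_trichotomy a 0 with ha | rfl | ha
  · exact Or.inr ⟨ha.le, hneg ha⟩
  · exact (le_total 0 b).imp (⟨le_rfl, ·⟩) (⟨le_rfl, ·⟩)
  · exact Or.inl ⟨ha.le, hpos ha⟩

def quadrantDir : Fin 4 → ℝ × ℝ →ₗ[ℝ] ℝ :=
  ![LinearMap.fst ℝ ℝ ℝ, LinearMap.snd ℝ ℝ ℝ, -LinearMap.fst ℝ ℝ ℝ, -LinearMap.snd ℝ ℝ ℝ]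

theorem exists_quadrantDir_of_not_sameQuadrant {v w : ℝ × ℝ} (h : ¬ SameQuadrant v w) :
    ∃ j, 0 < quadrantDir j v ∧ quadrantDir j w < 0 := by
  by_contra! H
  have h0 := H 0
  have h1 := H 1
  have h2 := H 2
  have h3 := H 3
  simp only [quadrantDir, Matrix.cons_val, LinearMap.neg_apply, LinearMap.fst_apply,
    LinearMap.snd_apply, neg_pos, neg_nonneg] at h0 h1 h2 h3
  apply h
  rcases same_weak_sign_of_imp h0 h2 with hx | hx <;>
    rcases same_weak_sign_of_imp h1 h3 with hy | hy
  · exact Or.inl ⟨⟨hx.1, hy.1⟩, hx.2, hy.2⟩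
  · exact Or.inr <| Or.inr <| Or.inr ⟨⟨hx.1, hy.1⟩, hx.2, hy.2⟩
  · exact Or.inr <| Or.inl ⟨⟨hx.1, hy.1⟩, hx.2, hy.2⟩
  · exact Or.inr <| Or.inr <| Or.inl ⟨⟨hx.1, hy.1⟩, hx.2, hy.2⟩

/-- Main theorem on CPDs: if no two consecutive edge vectors of a CPD with `n`
vertices lie in the same closed quadrant, then `n ≤ 4`. -/
theorem CPD_le_four (n : ℕ) (A : ℤ → ℝ × ℝ) (hA : IsCPD n A)
    (hcons : ∀ k : ℤ, ¬ SameQuadrant (A k - A (k - 1)) (A (k + 1) - A k)) :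
    n ≤ 4 := by
  by_contra! hn
  have hpeak (k : ℤ) : ∃ j, IsPeak (quadrantDir j) A k := by
    obtain ⟨j, hin, hout⟩ := exists_quadrantDir_of_not_sameQuadrant (hcons k)
    rw [map_sub, sub_pos] at hin
    rw [map_sub, sub_neg] at hout
    exact ⟨j, hin, hout⟩
  choose dir hdir using hpeak
  obtain ⟨k, l, hkl, hdir_eq⟩ :=
    Fintype.exists_ne_map_eq_of_card_lt (fun k : Fin 5 ↦ dir k) (by simp)
  have hdvd := hA.dvd_sub_of_isPeak (hdir k) (hdir_eq ▸ hdir l)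
  have hlt : |((l : ℕ) : ℤ) - (k : ℕ)| < n := abs_sub_lt_iff.2 ⟨by omega, by omega⟩
  have hzero := Int.eq_zero_of_abs_lt_dvd hdvd hlt
  exact hkl (Fin.ext (by omega))
end
end

section
/- Lemma of the three points: Let A, B, C be three distinct non-collinear points of the unit square [0,1]² such that the vectors B - A and C - B lie in the same closed quadrant, and such that the lines (A,B) and (B,C) belong to D_{m,n}. Then there exists a line D ∈ D_{m,n} with equation φ(M) = 0 passing through B such that φ(A)·φ(C) < 0 (i.e., D separates A and C). -/
/-!
Let `φ₁`, `φ₂` be integer equations of the lines `(A,B)` and `(B,C)`, with signs chosen so that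
`φ₁(C)` and `φ₂(A)` have the same sign. Then `φ₁ - φ₂` vanishes at `B`, equals `-φ₂(A)` at `A`
and `φ₁(C)` at `C`, so it separates `A` from `C`. The normals of `φ₁` and `φ₂` are the vectors
`B - A` and `C - B` rotated by a quarter turn and scaled by factors of the same sign; since
`B - A` and `C - B` lie in the same quadrant, corresponding coefficients of `φ₁` and `φ₂` have
the same sign, so their differences still satisfy `|u| ≤ m` and `|v| ≤ n`.
-/


noncomputable section

/-- The paper's affine equation `φ` of the integer line `u x + v y = w`. -/
def intForm (u v w : ℤ) (p : ℝ × ℝ) : ℝ := u * p.1 + v * p.2 - w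

lemma intForm_sub_intForm (u v w : ℤ) (p q : ℝ × ℝ) :
    intForm u v w p - intForm u v w q = u * (p - q).1 + v * (p - q).2 := by
  simp only [intForm, Prod.fst_sub, Prod.snd_sub]
  ring

lemma intForm_neg (u v w : ℤ) (p : ℝ × ℝ) : intForm (-u) (-v) (-w) p = -intForm u v w p := by
  simp only [intForm, Int.cast_neg]
  ring

lemma intForm_sub (u₁ v₁ w₁ u₂ v₂ w₂ : ℤ) (p : ℝ × ℝ) :
    intForm (u₁ - u₂) (v₁ - v₂) (w₁ - w₂) p = intForm u₁ v₁ w₁ p - intForm u₂ v₂ w₂ p := by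
  simp only [intForm, Int.cast_sub]
  ring

lemma IsFareyLine.exists_intForm {m n : ℕ} {L : Set (ℝ × ℝ)} (hL : IsFareyLine m n L) :
    ∃ u v w : ℤ, |u| ≤ (m : ℤ) ∧ |v| ≤ (n : ℤ) ∧ (u, v) ≠ (0, 0) ∧
      ∀ p, p ∈ L ↔ intForm u v w p = 0 := by
  obtain ⟨-, u, v, w, hu, hv, huv, rfl⟩ := hL
  exact ⟨u, v, w, hu, hv, huv, fun p => sub_eq_zero.symm⟩

lemma isFareyLine_of_intForm_eq_zero {m n : ℕ} {u v w : ℤ} (hu : |u| ≤ (m : ℤ))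
    (hv : |v| ≤ (n : ℤ)) (huv : (u, v) ≠ (0, 0)) {p : ℝ × ℝ} (hp : p ∈ unitSquare)
    (hpw : intForm u v w p = 0) :
    IsFareyLine m n {p : ℝ × ℝ | (u : ℝ) * p.1 + (v : ℝ) * p.2 = (w : ℝ)} :=
  ⟨⟨p, sub_eq_zero.mp hpw, hp⟩, u, v, w, hu, hv, huv, rfl⟩

lemma ne_zero_of_intForm_mul_neg {u v w : ℤ} {p q : ℝ × ℝ}
    (h : intForm u v w p * intForm u v w q < 0) : (u, v) ≠ (0, 0) := by
  rintro ⟨⟩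
  simp only [intForm, Int.cast_zero, zero_mul, zero_add, zero_sub, neg_mul_neg] at h
  exact (mul_self_nonneg _).not_gt h

lemma SameQuadrant.mul_nonneg {d e : ℝ × ℝ} (h : SameQuadrant d e) :
    0 ≤ d.1 * e.1 ∧ 0 ≤ d.2 * e.2 := by
  rcases h with ⟨⟨h₁, h₂⟩, h₃, h₄⟩ | ⟨⟨h₁, h₂⟩, h₃, h₄⟩ | ⟨⟨h₁, h₂⟩, h₃, h₄⟩ | ⟨⟨h₁, h₂⟩, h₃, h₄⟩
  all_goals constructor <;> nlinarith

/-- A vector `(a, b)` orthogonal to `d ≠ 0` is a multiple of the rotated vector `(-d.2, d.1)`;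
scaling by `det2 d x` makes this explicit without dividing. -/
lemma mul_det2_of_orthogonal {a b : ℝ} {d : ℝ × ℝ} (h : a * d.1 + b * d.2 = 0) (x : ℝ × ℝ) :
    a * det2 d x = -d.2 * (a * x.1 + b * x.2) ∧ b * det2 d x = d.1 * (a * x.1 + b * x.2) := by
  unfold det2
  constructor
  · linear_combination x.2 * h
  · linear_combination -x.1 * h

lemma mul_nonneg_of_orthogonal_of_sameQuadrant {a b c f : ℝ} {d e : ℝ × ℝ}
    (hd : a * d.1 + b * d.2 = 0) (he : c * e.1 + f * e.2 = 0) (hde : det2 d e ≠ 0)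
    (hsign : (a * e.1 + b * e.2) * (c * d.1 + f * d.2) < 0) (hquad : SameQuadrant d e) :
    0 ≤ a * c ∧ 0 ≤ b * f := by
  obtain ⟨ha, hb⟩ := mul_det2_of_orthogonal hd e
  obtain ⟨hc, hf⟩ := mul_det2_of_orthogonal he d
  have hed : det2 e d = -det2 d e := by unfold det2; ring
  rw [hed] at hc hf
  set s := a * e.1 + b * e.2
  set t := c * d.1 + f * d.2
  obtain ⟨h₁, h₂⟩ := hquad.mul_nonneg
  have hD : 0 < det2 d e * det2 d e := mul_self_pos.mpr hde
  have hst : 0 ≤ -(s * t) := neg_nonneg.mpr hsign.le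
  constructor
  · refine nonneg_of_mul_nonneg_right ?_ hD
    calc 0 ≤ d.2 * e.2 * -(s * t) := mul_nonneg h₂ hst
      _ = det2 d e * det2 d e * (a * c) := by
        linear_combination (-d.2 * s) * hc + (c * -det2 d e) * ha
  · refine nonneg_of_mul_nonneg_right ?_ hD
    calc 0 ≤ d.1 * e.1 * -(s * t) := mul_nonneg h₁ hst
      _ = det2 d e * det2 d e * (b * f) := by
        linear_combination (d.1 * s) * hf + (f * -det2 d e) * hb

lemma abs_sub_le_of_mul_nonneg {a b k : ℤ} (hab : 0 ≤ a * b) (ha : |a| ≤ k) (hb : |b| ≤ k) :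
    |a - b| ≤ k := by
  rw [abs_le] at ha hb ⊢
  rcases mul_nonneg_iff.mp hab with ⟨h₁, h₂⟩ | ⟨h₁, h₂⟩ <;> constructor <;> linarith

lemma exists_separating_of_intForm_mul_pos {m n : ℕ} {A B C : ℝ × ℝ} (hB : B ∈ unitSquare)
    (hncol : det2 (B - A) (C - A) ≠ 0) (hquad : SameQuadrant (B - A) (C - B))
    {u₁ v₁ w₁ u₂ v₂ w₂ : ℤ} (hu₁ : |u₁| ≤ (m : ℤ)) (hv₁ : |v₁| ≤ (n : ℤ))
    (hu₂ : |u₂| ≤ (m : ℤ)) (hv₂ : |v₂| ≤ (n : ℤ))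
    (hA₁ : intForm u₁ v₁ w₁ A = 0) (hB₁ : intForm u₁ v₁ w₁ B = 0)
    (hB₂ : intForm u₂ v₂ w₂ B = 0) (hC₂ : intForm u₂ v₂ w₂ C = 0)
    (hpos : 0 < intForm u₁ v₁ w₁ C * intForm u₂ v₂ w₂ A) :
    ∃ u v w : ℤ, |u| ≤ (m : ℤ) ∧ |v| ≤ (n : ℤ) ∧ (u, v) ≠ (0, 0) ∧
      IsFareyLine m n {p : ℝ × ℝ | (u : ℝ) * p.1 + (v : ℝ) * p.2 = (w : ℝ)} ∧
      (u : ℝ) * B.1 + (v : ℝ) * B.2 = (w : ℝ) ∧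
      ((u : ℝ) * A.1 + (v : ℝ) * A.2 - w) *
        ((u : ℝ) * C.1 + (v : ℝ) * C.2 - w) < 0 := by
  have hBφ : intForm (u₁ - u₂) (v₁ - v₂) (w₁ - w₂) B = 0 := by
    rw [intForm_sub, hB₁, hB₂, sub_zero]
  have hsep : intForm (u₁ - u₂) (v₁ - v₂) (w₁ - w₂) A *
      intForm (u₁ - u₂) (v₁ - v₂) (w₁ - w₂) C < 0 := by
    rw [intForm_sub, intForm_sub, hA₁, hC₂, sub_zero, zero_sub, neg_mul, mul_comm]
    exact neg_neg_of_pos hpos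
  have hdet : det2 (B - A) (C - B) ≠ 0 := by
    convert hncol using 1; simp only [det2, Prod.fst_sub, Prod.snd_sub]; ring
  have hC : intForm u₁ v₁ w₁ C = u₁ * (C - B).1 + v₁ * (C - B).2 := by
    rw [← intForm_sub_intForm, hB₁, sub_zero]
  have hA : intForm u₂ v₂ w₂ A = -(u₂ * (B - A).1 + v₂ * (B - A).2) := by
    rw [← intForm_sub_intForm, hB₂, zero_sub, neg_neg]
  obtain ⟨hu, hv⟩ := mul_nonneg_of_orthogonal_of_sameQuadrant
    (by rw [← intForm_sub_intForm, hA₁, hB₁, sub_zero])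
    (by rw [← intForm_sub_intForm, hC₂, hB₂, sub_zero]) hdet
    (by rw [hC, hA, mul_neg] at hpos; linarith) hquad
  have huv := ne_zero_of_intForm_mul_neg hsep
  have hu' := abs_sub_le_of_mul_nonneg (by exact_mod_cast hu) hu₁ hu₂
  have hv' := abs_sub_le_of_mul_nonneg (by exact_mod_cast hv) hv₁ hv₂
  exact ⟨u₁ - u₂, v₁ - v₂, w₁ - w₂, hu', hv', huv,
    isFareyLine_of_intForm_eq_zero hu' hv' huv hB hBφ, sub_eq_zero.mp hBφ, hsep⟩

theorem three_points_lemma_general (m n : ℕ)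
    (A B C : ℝ × ℝ) (hB : B ∈ unitSquare)
    (hncol : det2 (B - A) (C - A) ≠ 0)
    (hquad : SameQuadrant (B - A) (C - B))
    (hlAB : IsFareyLine m n {p : ℝ × ℝ | det2 (B - A) (p - A) = 0})
    (hlBC : IsFareyLine m n {p : ℝ × ℝ | det2 (C - B) (p - B) = 0}) :
    ∃ u v w : ℤ, |u| ≤ (m : ℤ) ∧ |v| ≤ (n : ℤ) ∧ (u, v) ≠ (0, 0) ∧
      IsFareyLine m n {p : ℝ × ℝ | (u : ℝ) * p.1 + (v : ℝ) * p.2 = (w : ℝ)} ∧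
      (u : ℝ) * B.1 + (v : ℝ) * B.2 = (w : ℝ) ∧
      ((u : ℝ) * A.1 + (v : ℝ) * A.2 - w) *
        ((u : ℝ) * C.1 + (v : ℝ) * C.2 - w) < 0 := by
  obtain ⟨u₁, v₁, w₁, hu₁, hv₁, -, hφ₁⟩ := hlAB.exists_intForm
  obtain ⟨u₂, v₂, w₂, hu₂, hv₂, -, hφ₂⟩ := hlBC.exists_intForm
  have hA₁ : intForm u₁ v₁ w₁ A = 0 := (hφ₁ A).mp (by simp [det2])
  have hB₁ : intForm u₁ v₁ w₁ B = 0 := (hφ₁ B).mp (by simp only [Set.mem_ofPred_eq, det2]; ring)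
  have hC₁ : intForm u₁ v₁ w₁ C ≠ 0 := mt (hφ₁ C).mpr hncol
  have hB₂ : intForm u₂ v₂ w₂ B = 0 := (hφ₂ B).mp (by simp [det2])
  have hC₂ : intForm u₂ v₂ w₂ C = 0 := (hφ₂ C).mp (by simp only [Set.mem_ofPred_eq, det2]; ring)
  have hA₂ : intForm u₂ v₂ w₂ A ≠ 0 := by
    refine mt (hφ₂ A).mpr ?_
    rwa [Set.mem_ofPred_eq, show det2 (C - B) (A - B) = det2 (B - A) (C - A) by
      simp only [det2, Prod.fst_sub, Prod.snd_sub]; ring]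
  rcases (mul_ne_zero hC₁ hA₂).lt_or_gt with hneg | hpos
  · refine exists_separating_of_intForm_mul_pos hB hncol hquad hu₁ hv₁ (u₂ := -u₂) (v₂ := -v₂)
      (w₂ := -w₂) (by rwa [abs_neg]) (by rwa [abs_neg]) hA₁ hB₁ ?_ ?_ ?_ <;>
      simp only [intForm_neg, hB₂, hC₂, neg_zero, mul_neg, neg_pos, hneg]
  · exact exists_separating_of_intForm_mul_pos hB hncol hquad hu₁ hv₁ hu₂ hv₂ hA₁ hB₁ hB₂ hC₂ hpos

/-- Lemma of the three points: if `A`, `B`, `C` are distinct non-collinear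
points of the unit square with `B - A` and `C - B` in the same closed quadrant,
and the lines `(A,B)` and `(B,C)` belong to `D_{m,n}`, then some line of
`D_{m,n}` passes through `B` and strictly separates `A` from `C`. -/
theorem three_points_lemma (m n : ℕ) (hm : 0 < m) (hn : 0 < n)
    (A B C : ℝ × ℝ) (hA : A ∈ unitSquare) (hB : B ∈ unitSquare)
    (hC : C ∈ unitSquare) (hAB : A ≠ B) (hBC : B ≠ C) (hAC : A ≠ C)
    (hncol : det2 (B - A) (C - A) ≠ 0)
    (hquad : SameQuadrant (B - A) (C - B))
    (hlAB : IsFareyLine m n {p : ℝ × ℝ | det2 (B - A) (p - A) = 0})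
    (hlBC : IsFareyLine m n {p : ℝ × ℝ | det2 (C - B) (p - B) = 0}) :
    ∃ u v w : ℤ, |u| ≤ (m : ℤ) ∧ |v| ≤ (n : ℤ) ∧ (u, v) ≠ (0, 0) ∧
      IsFareyLine m n {p : ℝ × ℝ | (u : ℝ) * p.1 + (v : ℝ) * p.2 = (w : ℝ)} ∧
      (u : ℝ) * B.1 + (v : ℝ) * B.2 = (w : ℝ) ∧
      ((u : ℝ) * A.1 + (v : ℝ) * A.2 - w) *
        ((u : ℝ) * C.1 + (v : ℝ) * C.2 - w) < 0 :=
  three_points_lemma_general m n A B C hB hncol hquad hlAB hlBC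
end
end

section
/- Let A, B, C be distinct non-collinear points in [0,1]² with B - A and C - B both in the first closed quadrant (so x_A ≤ x_B ≤ x_C and y_A ≤ y_B ≤ y_C). Suppose lines (A,B) and (B,C) have integer equations f(x,y) = ux + vy - w and f'(x,y) = u'x + v'y - w' respectively with u, u' ≤ 0 and v, v' ≥ 0, |u|, |u'| ≤ m, |v|, |v'| ≤ n, normalized so that f is a positive multiple of M ↦ det(B - A, M - A) and f' a positive multiple of M ↦ det(C - B, M - B). Then φ = f - f' vanishes at B, satisfies φ(A)·φ(C) < 0, and its linear part (u - u', v - v') satisfies |u - u'| ≤ m, |v - v'| ≤ n and (u - u', v - v') ≠ (0,0). -/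
noncomputable section

/-!
The equation `f` of `(A,B)` vanishes at `A` and `B`, and `f'` of `(B,C)` at `B` and `C`, so
`φ = f - f'` vanishes at `B`, while `φ(C) = f(C)` and `φ(A) = -f'(A)`. By the normalization both
`f(C)` and `f'(A)` are positive multiples of the same determinant `det(B - A, C - A)` (for `f'(A)`
by cyclic invariance of the signed area), so `φ(A)` and `φ(C)` have opposite signs. A zero linear
part would make `φ` constant, which is impossible once it changes sign. The coefficient bounds hold
because `u, u'` have the same sign, and so do `v, v'`.
-/

lemma det2_self (v : ℝ × ℝ) : det2 v v = 0 := by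
  unfold det2; ring

lemma det2_zero_right (v : ℝ × ℝ) : det2 v 0 = 0 := by
  simp [det2]

lemma det2_sub_cyclic (A B C : ℝ × ℝ) : det2 (C - B) (A - B) = det2 (B - A) (C - A) := by
  simp only [det2, Prod.fst_sub, Prod.snd_sub]; ring

section EdgeEquations

variable {f f' : ℝ × ℝ → ℝ} {A B C : ℝ × ℝ} {c c' : ℝ}

lemma sub_eq_zero_at_common_vertex (hf : ∀ p, f p = c * det2 (B - A) (p - A))
    (hf' : ∀ p, f' p = c' * det2 (C - B) (p - B)) : f B - f' B = 0 := by
  rw [hf, hf', sub_self, det2_zero_right, det2_self]; ring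

lemma sub_mul_sub_neg_at_ends (hc : 0 < c) (hc' : 0 < c')
    (hf : ∀ p, f p = c * det2 (B - A) (p - A)) (hf' : ∀ p, f' p = c' * det2 (C - B) (p - B))
    (hncol : det2 (B - A) (C - A) ≠ 0) : (f A - f' A) * (f C - f' C) < 0 := by
  have hd : 0 < det2 (B - A) (C - A) ^ 2 := by positivity
  rw [hf A, hf C, hf' A, hf' C, sub_self, det2_zero_right, det2_self, det2_sub_cyclic]
  nlinarith [mul_pos (mul_pos hc hc') hd]

end EdgeEquations

lemma linear_part_ne_zero_of_mul_neg {a b w : ℤ} {P Q : ℝ × ℝ}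
    (h : ((a : ℝ) * P.1 + b * P.2 - w) * (a * Q.1 + b * Q.2 - w) < 0) : (a, b) ≠ (0, 0) := by
  intro hab
  obtain ⟨rfl, rfl⟩ := Prod.mk.inj hab
  exact (mul_self_nonneg _).not_gt (by simpa using h)

theorem three_points_explicit_general (m n : ℕ) (A B C : ℝ × ℝ)
    (hncol : det2 (B - A) (C - A) ≠ 0)
    (u v w u' v' w' : ℤ)
    (hu : u ≤ 0) (hv : 0 ≤ v) (hu' : u' ≤ 0) (hv' : 0 ≤ v')
    (hum : |u| ≤ (m : ℤ)) (hvn : |v| ≤ (n : ℤ))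
    (hu'm : |u'| ≤ (m : ℤ)) (hv'n : |v'| ≤ (n : ℤ))
    (hf : ∃ c : ℝ, 0 < c ∧ ∀ p : ℝ × ℝ,
      (u : ℝ) * p.1 + (v : ℝ) * p.2 - (w : ℝ) = c * det2 (B - A) (p - A))
    (hf' : ∃ c : ℝ, 0 < c ∧ ∀ p : ℝ × ℝ,
      (u' : ℝ) * p.1 + (v' : ℝ) * p.2 - (w' : ℝ) = c * det2 (C - B) (p - B)) :
    (((u - u' : ℤ) : ℝ) * B.1 + ((v - v' : ℤ) : ℝ) * B.2 - ((w - w' : ℤ) : ℝ) = 0) ∧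
    (((u - u' : ℤ) : ℝ) * A.1 + ((v - v' : ℤ) : ℝ) * A.2 - ((w - w' : ℤ) : ℝ)) *
      (((u - u' : ℤ) : ℝ) * C.1 + ((v - v' : ℤ) : ℝ) * C.2 - ((w - w' : ℤ) : ℝ)) < 0 ∧
    |u - u'| ≤ (m : ℤ) ∧ |v - v'| ≤ (n : ℤ) ∧ (u - u', v - v') ≠ (0, 0) := by
  obtain ⟨c, hc, hfc⟩ := hf
  obtain ⟨c', hc', hfc'⟩ := hf'
  have hφ (p : ℝ × ℝ) : ((u - u' : ℤ) : ℝ) * p.1 + ((v - v' : ℤ) : ℝ) * p.2 - ((w - w' : ℤ) : ℝ) =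
      ((u : ℝ) * p.1 + v * p.2 - w) - ((u' : ℝ) * p.1 + v' * p.2 - w') := by
    push_cast; ring
  have hsep : (((u - u' : ℤ) : ℝ) * A.1 + ((v - v' : ℤ) : ℝ) * A.2 - ((w - w' : ℤ) : ℝ)) *
      (((u - u' : ℤ) : ℝ) * C.1 + ((v - v' : ℤ) : ℝ) * C.2 - ((w - w' : ℤ) : ℝ)) < 0 := by
    rw [hφ, hφ]; exact sub_mul_sub_neg_at_ends hc hc' hfc hfc' hncol
  refine ⟨by rw [hφ]; exact sub_eq_zero_at_common_vertex hfc hfc', hsep, ?_, ?_,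
    linear_part_ne_zero_of_mul_neg hsep⟩
  · simpa using abs_sub_le_of_le_of_le (neg_le_of_abs_le hum) hu (neg_le_of_abs_le hu'm) hu'
  · exact abs_sub_le_of_nonneg_of_le hv (le_of_abs_le hvn) hv' (le_of_abs_le hv'n)

/-- Explicit form of the separating line in the lemma of the three points:
with normalized equations `f` of `(A,B)` and `f'` of `(B,C)`, the difference
`φ = f - f'` vanishes at `B`, separates `A` from `C`, and has admissible
integer coefficients. -/
theorem three_points_explicit (m n : ℕ) (hm : 0 < m) (hn : 0 < n)
    (A B C : ℝ × ℝ) (hA : A ∈ unitSquare) (hB : B ∈ unitSquare)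
    (hC : C ∈ unitSquare) (hAB : A ≠ B) (hBC : B ≠ C) (hAC : A ≠ C)
    (hncol : det2 (B - A) (C - A) ≠ 0)
    (hq1 : Q1 (B - A)) (hq2 : Q1 (C - B))
    (u v w u' v' w' : ℤ)
    (hu : u ≤ 0) (hv : 0 ≤ v) (hu' : u' ≤ 0) (hv' : 0 ≤ v')
    (hum : |u| ≤ (m : ℤ)) (hvn : |v| ≤ (n : ℤ))
    (hu'm : |u'| ≤ (m : ℤ)) (hv'n : |v'| ≤ (n : ℤ))
    (hf : ∃ c : ℝ, 0 < c ∧ ∀ p : ℝ × ℝ,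
      (u : ℝ) * p.1 + (v : ℝ) * p.2 - (w : ℝ) = c * det2 (B - A) (p - A))
    (hf' : ∃ c : ℝ, 0 < c ∧ ∀ p : ℝ × ℝ,
      (u' : ℝ) * p.1 + (v' : ℝ) * p.2 - (w' : ℝ) = c * det2 (C - B) (p - B)) :
    (((u - u' : ℤ) : ℝ) * B.1 + ((v - v' : ℤ) : ℝ) * B.2 - ((w - w' : ℤ) : ℝ) = 0) ∧
    (((u - u' : ℤ) : ℝ) * A.1 + ((v - v' : ℤ) : ℝ) * A.2 - ((w - w' : ℤ) : ℝ)) *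
      (((u - u' : ℤ) : ℝ) * C.1 + ((v - v' : ℤ) : ℝ) * C.2 - ((w - w' : ℤ) : ℝ)) < 0 ∧
    |u - u'| ≤ (m : ℤ) ∧ |v - v'| ≤ (n : ℤ) ∧ (u - u', v - v') ≠ (0, 0) :=
  three_points_explicit_general m n A B C hncol u v w u' v' w' hu hv hu' hv' hum hvn hu'm hv'n hf
    hf'
end
end

section
/- Theorem (Tajine–Daurat): For all positive integers m, n, the closure of every connected component of the Farey complex CF(m,n) is a triangle or a quadrilateral (i.e., a convex polygon with 3 or 4 vertices). -/
noncomputable section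

/-!
Write `P` for the closure of the component of `p₀`. Every Farey line misses `p₀`, so orienting
each one towards `p₀` shows that the component is the open polygon cut out by these half-planes
and `P` the closed one: a compact convex polygon, the convex hull of its finitely many extreme
points, with nonempty interior, hence with at least three vertices.

Farey property: if two constraints of `P` have normals `(u, v)`, `(u', v')` in a common closed
quadrant, then `|u' - u| ≤ m` and `|v' - v| ≤ n`, so the difference of the two affine forms
has a constant sign on `P` (otherwise its zero line would cross the unit square and be a Farey line
through the interior of the cell). Two consequences: the two edges at a vertex have normals in
different quadrants, and all constraints with normal in one quadrant meet `P` inside a single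
line, which carries at most two vertices. Counting pairs (vertex, quadrant of an edge normal at
it) gives `2 · #vertices ≤ 4 · 2`.
-/

namespace TajineDaurat

open Set Filter Topology

lemma mem_openSegment_sub_add {E : Type*} [AddCommGroup E] [Module ℝ E] (x d : E) {a b : ℝ}
    (ha : 0 < a) (hb : 0 < b) : x ∈ openSegment ℝ (x - a • d) (x + b • d) := by
  refine ⟨b / (a + b), a / (a + b), by positivity, by positivity, by field_simp; ring, ?_⟩
  match_scalars <;> field_simp <;> ring

lemma eq_or_eq_or_eq_of_collinear {𝕜 E : Type*} [Field 𝕜] [LinearOrder 𝕜]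
    [IsStrictOrderedRing 𝕜] [AddCommGroup E] [Module 𝕜 E] {s : Set E} {x y z : E}
    (hx : x ∈ extremePoints 𝕜 s) (hy : y ∈ extremePoints 𝕜 s) (hz : z ∈ extremePoints 𝕜 s)
    (h : Collinear 𝕜 {x, y, z}) : x = y ∨ x = z ∨ y = z := by
  by_contra! hne
  obtain ⟨hxy, hxz, hyz⟩ := hne
  rcases h.wbtw_or_wbtw_or_wbtw with h | h | h
  · exact hxy (hy.2 hx.1 hz.1 (mem_openSegment_of_ne_left_right hxy hyz.symm h.mem_segment))
  · exact hyz (hz.2 hy.1 hx.1 (mem_openSegment_of_ne_left_right hyz hxz h.mem_segment))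
  · exact hxz
      (hx.2 hz.1 hy.1 (mem_openSegment_of_ne_left_right hxz.symm hxy.symm h.mem_segment)).symm

lemma collinear_of_forall_eq {a b c : ℝ} (hab : (a, b) ≠ (0, 0)) {s : Set (ℝ × ℝ)}
    (hs : ∀ p ∈ s, a * p.1 + b * p.2 = c) : Collinear ℝ s := by
  have hN : a ^ 2 + b ^ 2 ≠ 0 := by
    have : a ≠ 0 ∨ b ≠ 0 := by
      by_contra! h
      exact hab (by rw [h.1, h.2])
    rcases this with h | h <;> positivity
  refine (collinear_iff_exists_forall_eq_smul_vadd s).2 ⟨(c / (a ^ 2 + b ^ 2)) • (a, b), (-b, a),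
    fun p hp => ⟨(a * p.2 - b * p.1) / (a ^ 2 + b ^ 2), ?_⟩⟩
  have hp := hs p hp
  ext <;> simp only [vadd_eq_add, Prod.fst_add, Prod.snd_add, Prod.smul_fst, Prod.smul_snd,
    smul_eq_mul] <;> field_simp
  · linear_combination a * hp
  · linear_combination b * hp

lemma interior_convexHull_eq_empty_of_collinear {s : Set (ℝ × ℝ)} (h : Collinear ℝ s) :
    interior (convexHull ℝ s) = ∅ := by
  rw [← Set.not_nonempty_iff_eq_empty, interior_convexHull_nonempty_iff_affineSpan_eq_top]
  intro htop
  have := (collinear_iff_finrank_le_one (k := ℝ)).1 h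
  rw [← direction_affineSpan, htop, AffineSubspace.direction_top, finrank_top,
    Module.finrank_prod, Module.finrank_self] at this
  omega

/-- Sweep `r` towards `v` until it is about to leave the cone `{d | ∀ j ∈ A, 0 ≤ f j d}`. -/
lemma exists_apply_sub_smul_eq_zero_and_nonneg {ι E : Type*} [AddCommGroup E] [Module ℝ E]
    (A : Finset ι) (hA : A.Nonempty) (f : ι → E →ₗ[ℝ] ℝ) {v : E} (hv : ∀ i ∈ A, 0 < f i v)
    (r : E) : ∃ i ∈ A, ∃ s : ℝ, f i (r - s • v) = 0 ∧ ∀ j ∈ A, 0 ≤ f j (r - s • v) := by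
  obtain ⟨i, hi, hmin⟩ := A.exists_min_image (fun j => f j r / f j v) hA
  refine ⟨i, hi, f i r / f i v, ?_, fun j hj => ?_⟩
  · rw [map_sub, map_smul, smul_eq_mul, div_mul_cancel₀ _ (hv i hi).ne', sub_self]
  · rw [map_sub, map_smul, smul_eq_mul, sub_nonneg, ← le_div_iff₀ (hv j hj)]
    exact hmin j hj

/-- The two edges `d₁`, `d₂` of a pointed polyhedral cone of the plane, found by sweeping the
normal `(-v.2, v.1)` of an interior direction `v` and its opposite towards `v`. -/
lemma exists_edge_directions {ι : Type*} (A : Finset ι) (hA : A.Nonempty)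
    (f : ι → ℝ × ℝ →ₗ[ℝ] ℝ) {v : ℝ × ℝ} (hv : ∀ i ∈ A, 0 < f i v)
    (hpointed : ∀ d, (∀ i ∈ A, f i d = 0) → d = 0) :
    ∃ i₁ ∈ A, ∃ i₂ ∈ A, ∃ d₁ d₂ : ℝ × ℝ, f i₁ d₁ = 0 ∧ f i₂ d₂ = 0 ∧ 0 < f i₂ d₁ ∧
      0 < f i₁ d₂ ∧ ∀ j ∈ A, 0 ≤ f j d₁ ∧ 0 ≤ f j d₂ := by
  set r : ℝ × ℝ := (-v.2, v.1)
  obtain ⟨i₁, hi₁, s₁, h₁, hd₁⟩ := exists_apply_sub_smul_eq_zero_and_nonneg A hA f hv r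
  obtain ⟨i₂, hi₂, s₂, h₂, hd₂⟩ := exists_apply_sub_smul_eq_zero_and_nonneg A hA f hv (-r)
  have hsum : ∀ j, f j (r - s₁ • v) + f j (-r - s₂ • v) = -(s₁ + s₂) * f j v := fun j => by
    simp only [map_sub, map_neg, map_smul, smul_eq_mul]; ring
  have hs : s₁ + s₂ < 0 := by
    by_contra! hs
    have h0 : r - s₁ • v = 0 := hpointed _ fun j hj => by
      nlinarith [hd₁ j hj, hd₂ j hj, hsum j, mul_nonneg hs (hv j hj).le]
    have hv0 : v = 0 := by
      have e₁ := congrArg Prod.fst h0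
      have e₂ := congrArg Prod.snd h0
      simp only [r, Prod.fst_sub, Prod.snd_sub, Prod.smul_fst, Prod.smul_snd, smul_eq_mul,
        Prod.fst_zero, Prod.snd_zero] at e₁ e₂
      have : v.1 ^ 2 + v.2 ^ 2 = 0 := by linear_combination v.1 * e₂ - v.2 * e₁
      ext <;> simp only [Prod.fst_zero, Prod.snd_zero] <;> nlinarith [sq_nonneg v.1, sq_nonneg v.2]
    obtain ⟨i, hi⟩ := hA
    simpa [hv0] using hv i hi
  refine ⟨i₁, hi₁, i₂, hi₂, _, _, h₁, h₂, ?_, ?_, fun j hj => ⟨hd₁ j hj, hd₂ j hj⟩⟩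
  · nlinarith [hsum i₂, mul_pos (neg_pos.2 hs) (hv i₂ hi₂)]
  · nlinarith [hsum i₁, mul_pos (neg_pos.2 hs) (hv i₁ hi₁)]

def quadrant : Fin 4 → ℝ × ℝ → Prop := ![Q1, Q2, Q3, Q4]

lemma sameQuadrant_iff {v w : ℝ × ℝ} :
    SameQuadrant v w ↔ ∃ k, quadrant k v ∧ quadrant k w := by
  simp [SameQuadrant, Fin.exists_fin_succ, quadrant]

lemma exists_quadrant (v : ℝ × ℝ) : ∃ k, quadrant k v := by
  rcases le_total 0 v.1 with h₁ | h₁ <;> rcases le_total 0 v.2 with h₂ | h₂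
  exacts [⟨0, show Q1 v from ⟨h₁, h₂⟩⟩, ⟨3, show Q4 v from ⟨h₁, h₂⟩⟩,
    ⟨1, show Q2 v from ⟨h₁, h₂⟩⟩, ⟨2, show Q3 v from ⟨h₁, h₂⟩⟩]

def linPart (t : ℤ × ℤ × ℤ) : ℝ × ℝ →ₗ[ℝ] ℝ :=
  (t.1 : ℝ) • LinearMap.fst ℝ ℝ ℝ + (t.2.1 : ℝ) • LinearMap.snd ℝ ℝ ℝ

/-- The affine form `u x + v y - w` of `t = (u, v, w)`, whose zero set is the line of `t`. -/
def lineForm (t : ℤ × ℤ × ℤ) (p : ℝ × ℝ) : ℝ := linPart t p - t.2.2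

def normal (t : ℤ × ℤ × ℤ) : ℝ × ℝ := (t.1, t.2.1)

lemma linPart_apply (t : ℤ × ℤ × ℤ) (d : ℝ × ℝ) :
    linPart t d = t.1 * d.1 + t.2.1 * d.2 := by
  simp [linPart]

lemma lineForm_eq_zero_iff {t : ℤ × ℤ × ℤ} {p : ℝ × ℝ} :
    lineForm t p = 0 ↔ (t.1 : ℝ) * p.1 + (t.2.1 : ℝ) * p.2 = t.2.2 := by
  rw [lineForm, linPart_apply, sub_eq_zero]

lemma lineForm_add_smul (t : ℤ × ℤ × ℤ) (p d : ℝ × ℝ) (δ : ℝ) :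
    lineForm t (p + δ • d) = lineForm t p + δ * linPart t d := by
  simp only [lineForm, map_add, map_smul, smul_eq_mul]; ring

lemma linPart_sub (t : ℤ × ℤ × ℤ) (p q : ℝ × ℝ) :
    linPart t (p - q) = lineForm t p - lineForm t q := by
  simp only [lineForm, map_sub]; ring

lemma lineForm_smul_add_smul (t : ℤ × ℤ × ℤ) (p q : ℝ × ℝ) {a b : ℝ} (hab : a + b = 1) :
    lineForm t (a • p + b • q) = a * lineForm t p + b * lineForm t q := by
  simp only [lineForm, map_add, map_smul, smul_eq_mul]
  linear_combination (t.2.2 : ℝ) * hab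

lemma lineForm_sub (t s : ℤ × ℤ × ℤ) (p : ℝ × ℝ) :
    lineForm (t - s) p = lineForm t p - lineForm s p := by
  simp only [lineForm, linPart_apply, Prod.fst_sub, Prod.snd_sub, Int.cast_sub]; ring

lemma lineForm_neg (t : ℤ × ℤ × ℤ) (p : ℝ × ℝ) : lineForm (-t) p = -lineForm t p := by
  simp only [lineForm, linPart_apply, Prod.fst_neg, Prod.snd_neg, Int.cast_neg]; ring

lemma continuous_lineForm (t : ℤ × ℤ × ℤ) : Continuous (lineForm t) :=
  (linPart t).continuous_of_finiteDimensional.sub continuous_const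

/-- The triples of the Farey lines; a line meeting the unit square has `|w| ≤ m + n`. -/
def fareyTriples (m n : ℕ) : Finset (ℤ × ℤ × ℤ) :=
  (Finset.Icc (-(m : ℤ)) m ×ˢ Finset.Icc (-(n : ℤ)) n ×ˢ
    Finset.Icc (-((m : ℤ) + n)) (m + n)).filter fun t => (t.1, t.2.1) ≠ (0, 0)

lemma mem_fareyTriples {m n : ℕ} {t : ℤ × ℤ × ℤ} :
    t ∈ fareyTriples m n ↔
      |t.1| ≤ m ∧ |t.2.1| ≤ n ∧ |t.2.2| ≤ (m : ℤ) + n ∧ (t.1, t.2.1) ≠ (0, 0) := by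
  simp [fareyTriples, abs_le, and_assoc]

lemma neg_mem_fareyTriples {m n : ℕ} {t : ℤ × ℤ × ℤ} (ht : t ∈ fareyTriples m n) :
    -t ∈ fareyTriples m n := by
  simpa [mem_fareyTriples] using ht

lemma mem_fareyTriples_of_lineForm_eq_zero {m n : ℕ} {t : ℤ × ℤ × ℤ} (h₁ : |t.1| ≤ m)
    (h₂ : |t.2.1| ≤ n) (h₀ : (t.1, t.2.1) ≠ (0, 0)) {p : ℝ × ℝ} (hp : p ∈ unitSquare)
    (hz : lineForm t p = 0) : t ∈ fareyTriples m n := by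
  refine mem_fareyTriples.2 ⟨h₁, h₂, ?_, h₀⟩
  obtain ⟨⟨hx₀, hy₀⟩, hx₁, hy₁⟩ := hp
  have h₁' : |(t.1 : ℝ)| ≤ m := by exact_mod_cast h₁
  have h₂' : |(t.2.1 : ℝ)| ≤ n := by exact_mod_cast h₂
  have : |(t.2.2 : ℝ)| ≤ m + n := by
    rw [← lineForm_eq_zero_iff.1 hz]
    rw [abs_le] at h₁' h₂' ⊢
    constructor <;> nlinarith
  exact_mod_cast this

lemma mem_fareyComplex_iff {m n : ℕ} {p : ℝ × ℝ} :
    p ∈ FareyComplex m n ↔ p ∈ unitSquare ∧ ∀ t ∈ fareyTriples m n, lineForm t p ≠ 0 := by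
  have hline (t : ℤ × ℤ × ℤ) : {q : ℝ × ℝ | lineForm t q = 0} =
      {q | (t.1 : ℝ) * q.1 + (t.2.1 : ℝ) * q.2 = t.2.2} :=
    Set.ext fun _ => lineForm_eq_zero_iff
  constructor
  · rintro ⟨hsq, hL⟩
    refine ⟨hsq, fun t ht hz =>
      hL {q | lineForm t q = 0} ⟨⟨p, hz, hsq⟩, t.1, t.2.1, t.2.2, ?_⟩ hz⟩
    obtain ⟨h₁, h₂, -, h₀⟩ := mem_fareyTriples.1 ht
    exact ⟨h₁, h₂, h₀, hline t⟩
  · rintro ⟨hsq, h⟩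
    refine ⟨hsq, ?_⟩
    rintro L ⟨⟨q, hqL, hqsq⟩, u, v, w, hu, hv, huv, rfl⟩ hpL
    rw [← hline (u, v, w)] at hqL hpL
    exact h _ (mem_fareyTriples_of_lineForm_eq_zero hu hv huv hqsq hqL) hpL

lemma abs_sub_le_of_sameQuadrant {t t' : ℤ × ℤ × ℤ}
    (hq : SameQuadrant (normal t) (normal t')) {M N : ℤ} (h₁ : |t.1| ≤ M) (h₁' : |t'.1| ≤ M)
    (h₂ : |t.2.1| ≤ N) (h₂' : |t'.2.1| ≤ N) : |(t' - t).1| ≤ M ∧ |(t' - t).2.1| ≤ N := by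
  simp only [SameQuadrant, Q1, Q2, Q3, Q4, normal, Int.cast_nonneg_iff, Int.cast_nonpos] at hq
  simp only [Prod.fst_sub, Prod.snd_sub, abs_le] at *
  omega

lemma card_le_two_of_forall_lineForm_eq_zero {s : Set (ℝ × ℝ)} {t : ℤ × ℤ × ℤ}
    (h₀ : (t.1, t.2.1) ≠ (0, 0)) {F : Finset (ℝ × ℝ)}
    (hF : ∀ x ∈ F, x ∈ extremePoints ℝ s ∧ lineForm t x = 0) : F.card ≤ 2 := by
  by_contra! h
  obtain ⟨x, hx, y, hy, z, hz, hxy, hxz, hyz⟩ := Finset.two_lt_card.1 h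
  have hcol : Collinear ℝ {x, y, z} := by
    refine collinear_of_forall_eq (a := t.1) (b := t.2.1) (c := t.2.2) (by simpa using h₀)
      fun p hp => ?_
    have hpF : p ∈ F := by rcases hp with rfl | rfl | rfl <;> assumption
    exact lineForm_eq_zero_iff.1 (hF p hpF).2
  rcases eq_or_eq_or_eq_of_collinear (hF x hx).1 (hF y hy).1 (hF z hz).1 hcol with h | h | h
  exacts [hxy h, hxz h, hyz h]

section Cell

variable {m n : ℕ} {p₀ : ℝ × ℝ}

/-- The triples whose half-plane `0 < lineForm t` contains `p₀`: for `p₀ ∈ CF(m,n)`, exactly one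
of `t` and `-t` for every Farey triple `t`. -/
def posTriples (m n : ℕ) (p₀ : ℝ × ℝ) : Finset (ℤ × ℤ × ℤ) :=
  (fareyTriples m n).filter fun t => 0 < lineForm t p₀

def openCell (m n : ℕ) (p₀ : ℝ × ℝ) : Set (ℝ × ℝ) :=
  {p | ∀ t ∈ posTriples m n p₀, 0 < lineForm t p}

def closedCell (m n : ℕ) (p₀ : ℝ × ℝ) : Set (ℝ × ℝ) :=
  {p | ∀ t ∈ posTriples m n p₀, 0 ≤ lineForm t p}

lemma mem_openCell_self : p₀ ∈ openCell m n p₀ := fun _ ht => (Finset.mem_filter.1 ht).2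

lemma openCell_subset_closedCell : openCell m n p₀ ⊆ closedCell m n p₀ :=
  fun _ hp t ht => (hp t ht).le

lemma convex_closedCell : Convex ℝ (closedCell m n p₀) := by
  intro p hp q hq a b ha hb hab t ht
  rw [lineForm_smul_add_smul t p q hab]
  exact add_nonneg (mul_nonneg ha (hp t ht)) (mul_nonneg hb (hq t ht))

lemma convex_openCell : Convex ℝ (openCell m n p₀) := by
  intro p hp q hq a b ha hb hab t ht
  rw [lineForm_smul_add_smul t p q hab]
  rcases ha.eq_or_lt with rfl | ha
  · rw [zero_add] at hab
    simpa [hab] using hq t ht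
  · exact add_pos_of_pos_of_nonneg (mul_pos ha (hp t ht)) (mul_nonneg hb (hq t ht).le)

lemma isOpen_openCell : IsOpen (openCell m n p₀) := by
  have : openCell m n p₀ = ⋂ t ∈ posTriples m n p₀, {p | 0 < lineForm t p} := by
    ext p; simp [openCell]
  rw [this]
  exact isOpen_biInter_finset fun t _ => isOpen_lt continuous_const (continuous_lineForm t)

lemma isClosed_closedCell : IsClosed (closedCell m n p₀) := by
  have : closedCell m n p₀ = ⋂ t ∈ posTriples m n p₀, {p | 0 ≤ lineForm t p} := by
    ext p; simp [closedCell]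
  rw [this]
  exact isClosed_biInter fun t _ => isClosed_le continuous_const (continuous_lineForm t)

lemma openSegment_subset_openCell {p : ℝ × ℝ} (hp : p ∈ closedCell m n p₀) :
    openSegment ℝ p p₀ ⊆ openCell m n p₀ := by
  rintro _ ⟨a, b, ha, hb, hab, rfl⟩ t ht
  rw [lineForm_smul_add_smul t p p₀ hab]
  exact add_pos_of_nonneg_of_pos (mul_nonneg ha.le (hp t ht)) (mul_pos hb (mem_openCell_self t ht))

lemma closure_openCell : closure (openCell m n p₀) = closedCell m n p₀ :=
  Subset.antisymm (closure_minimal openCell_subset_closedCell isClosed_closedCell) fun p hp =>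
    closure_mono (openSegment_subset_openCell hp)
      (segment_subset_closure_openSegment (left_mem_segment ℝ p p₀))

lemma mem_posTriples_of_nonneg (hp₀ : p₀ ∈ FareyComplex m n) {t : ℤ × ℤ × ℤ}
    (ht : t ∈ fareyTriples m n) (h : 0 ≤ lineForm t p₀) : t ∈ posTriples m n p₀ :=
  Finset.mem_filter.2 ⟨ht, h.lt_of_ne ((mem_fareyComplex_iff.1 hp₀).2 t ht).symm⟩

lemma mem_posTriples_or_neg_mem (hp₀ : p₀ ∈ FareyComplex m n) {t : ℤ × ℤ × ℤ}
    (ht : t ∈ fareyTriples m n) : t ∈ posTriples m n p₀ ∨ -t ∈ posTriples m n p₀ := by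
  rcases le_total 0 (lineForm t p₀) with h | h
  · exact .inl (mem_posTriples_of_nonneg hp₀ ht h)
  · refine .inr (mem_posTriples_of_nonneg hp₀ (neg_mem_fareyTriples ht) ?_)
    rw [lineForm_neg]
    linarith

lemma closedCell_subset_unitSquare (hm : 0 < m) (hn : 0 < n) (hp₀ : p₀ ∈ FareyComplex m n) :
    closedCell m n p₀ ⊆ unitSquare := by
  obtain ⟨⟨hx₀, hy₀⟩, hx₁, hy₁⟩ := hp₀.1
  intro p hp
  have side (t : ℤ × ℤ × ℤ) (ht : t ∈ fareyTriples m n) (h : 0 ≤ lineForm t p₀) :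
      0 ≤ lineForm t p :=
    hp t (mem_posTriples_of_nonneg hp₀ ht h)
  have h₁ := side (1, 0, 0) (by simp [mem_fareyTriples]; omega)
    (by simp [lineForm, linPart_apply]; linarith)
  have h₂ := side (-1, 0, -1) (by simp [mem_fareyTriples]; omega)
    (by simp [lineForm, linPart_apply]; linarith)
  have h₃ := side (0, 1, 0) (by simp [mem_fareyTriples]; omega)
    (by simp [lineForm, linPart_apply]; linarith)
  have h₄ := side (0, -1, -1) (by simp [mem_fareyTriples]; omega)
    (by simp [lineForm, linPart_apply]; linarith)
  simp [lineForm, linPart_apply] at h₁ h₂ h₃ h₄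
  exact ⟨⟨h₁, h₃⟩, by linarith, by linarith⟩

lemma openCell_subset_fareyComplex (hm : 0 < m) (hn : 0 < n) (hp₀ : p₀ ∈ FareyComplex m n) :
    openCell m n p₀ ⊆ FareyComplex m n := by
  intro p hp
  refine mem_fareyComplex_iff.2
    ⟨closedCell_subset_unitSquare hm hn hp₀ (openCell_subset_closedCell hp), fun t ht => ?_⟩
  rcases mem_posTriples_or_neg_mem hp₀ ht with h | h
  · exact (hp t h).ne'
  · have := hp (-t) h
    rw [lineForm_neg] at this
    exact (neg_pos.1 this).ne

lemma connectedComponentIn_eq_openCell (hm : 0 < m) (hn : 0 < n)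
    (hp₀ : p₀ ∈ FareyComplex m n) :
    connectedComponentIn (FareyComplex m n) p₀ = openCell m n p₀ := by
  refine Subset.antisymm (fun p hp t ht => ?_)
    (convex_openCell.isPreconnected.subset_connectedComponentIn mem_openCell_self
      (openCell_subset_fareyComplex hm hn hp₀))
  obtain ⟨ht, ht₀⟩ := Finset.mem_filter.1 ht
  by_contra! hle
  obtain ⟨z, hz, hz₀⟩ := isPreconnected_connectedComponentIn.intermediate_value hp
    (mem_connectedComponentIn hp₀) (continuous_lineForm t).continuousOn ⟨hle, ht₀.le⟩
  exact (mem_fareyComplex_iff.1 (connectedComponentIn_subset _ _ hz)).2 t ht hz₀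

lemma lineForm_nonneg_or_nonpos (hm : 0 < m) (hn : 0 < n) (hp₀ : p₀ ∈ FareyComplex m n)
    {u : ℤ × ℤ × ℤ} (hu₁ : |u.1| ≤ m) (hu₂ : |u.2.1| ≤ n) :
    (∀ p ∈ closedCell m n p₀, 0 ≤ lineForm u p) ∨
      (∀ p ∈ closedCell m n p₀, lineForm u p ≤ 0) := by
  by_contra! h
  obtain ⟨⟨p, hp, hup⟩, ⟨q, hq, huq⟩⟩ := h
  obtain ⟨z, hz, huz⟩ := convex_closedCell.isPreconnected.intermediate_value hp hq
    (continuous_lineForm u).continuousOn ⟨hup.le, huq.le⟩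
  have hu₀ : (u.1, u.2.1) ≠ (0, 0) := by
    intro h0
    simp only [Prod.mk.injEq] at h0
    simp only [lineForm, linPart_apply, h0.1, h0.2, Int.cast_zero, zero_mul, add_zero] at hup huq
    linarith
  have hu := mem_fareyTriples_of_lineForm_eq_zero hu₁ hu₂ hu₀
    (closedCell_subset_unitSquare hm hn hp₀ hz) huz
  rcases mem_posTriples_or_neg_mem hp₀ hu with h | h
  · linarith [hp u h]
  · linarith [hq (-u) h, lineForm_neg u q]

/-- The Farey property: two constraints with normals in a common quadrant differ by a form with
admissible normal, hence of constant sign on the cell. -/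
lemma le_or_ge_of_sameQuadrant (hm : 0 < m) (hn : 0 < n) (hp₀ : p₀ ∈ FareyComplex m n)
    {t t' : ℤ × ℤ × ℤ} (ht : t ∈ posTriples m n p₀) (ht' : t' ∈ posTriples m n p₀)
    (hq : SameQuadrant (normal t) (normal t')) :
    (∀ p ∈ closedCell m n p₀, lineForm t p ≤ lineForm t' p) ∨
      (∀ p ∈ closedCell m n p₀, lineForm t' p ≤ lineForm t p) := by
  obtain ⟨h₁, h₂, -⟩ := mem_fareyTriples.1 (Finset.mem_filter.1 ht).1
  obtain ⟨h₁', h₂', -⟩ := mem_fareyTriples.1 (Finset.mem_filter.1 ht').1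
  obtain ⟨hd₁, hd₂⟩ := abs_sub_le_of_sameQuadrant hq h₁ h₁' h₂ h₂'
  refine (lineForm_nonneg_or_nonpos hm hn hp₀ hd₁ hd₂).imp (fun h p hp => ?_) (fun h p hp => ?_)
  · linarith [h p hp, lineForm_sub t' t p]
  · linarith [h p hp, lineForm_sub t' t p]

lemma not_sameQuadrant_of_crossing (hm : 0 < m) (hn : 0 < n) (hp₀ : p₀ ∈ FareyComplex m n)
    {t t' : ℤ × ℤ × ℤ} (ht : t ∈ posTriples m n p₀) (ht' : t' ∈ posTriples m n p₀)
    {y y' : ℝ × ℝ} (hy : y ∈ closedCell m n p₀) (hy' : y' ∈ closedCell m n p₀)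
    (hty : lineForm t y = 0) (ht'y : 0 < lineForm t' y)
    (ht'y' : lineForm t' y' = 0) (hty' : 0 < lineForm t y') :
    ¬SameQuadrant (normal t) (normal t') := fun hq => by
  rcases le_or_ge_of_sameQuadrant hm hn hp₀ ht ht' hq with h | h
  · linarith [h y' hy']
  · linarith [h y hy]

/-- Witness: the lowest such line for the order given by `le_or_ge_of_sameQuadrant`. -/
lemma exists_common_line (hm : 0 < m) (hn : 0 < n) (hp₀ : p₀ ∈ FareyComplex m n) (k : Fin 4) :
    ∃ t₀ ∈ fareyTriples m n, ∀ t ∈ posTriples m n p₀, quadrant k (normal t) →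
      ∀ p ∈ closedCell m n p₀, lineForm t p = 0 → lineForm t₀ p = 0 := by
  classical
  set T := (posTriples m n p₀).filter fun t => quadrant k (normal t)
  rcases T.eq_empty_or_nonempty with hT | hT
  · refine ⟨(1, 0, 0), by simp [mem_fareyTriples]; omega, fun t ht hk => ?_⟩
    have : t ∈ T := Finset.mem_filter.2 ⟨ht, hk⟩
    simp [hT] at this
  obtain ⟨t₀, ht₀, hmin⟩ := T.exists_minimalFor
    (fun t (p : closedCell m n p₀) => lineForm t p) hT
  obtain ⟨ht₀, hk₀⟩ := Finset.mem_filter.1 ht₀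
  refine ⟨t₀, (Finset.mem_filter.1 ht₀).1, fun t ht hk p hp hz => ?_⟩
  have hle : lineForm t₀ p ≤ lineForm t p := by
    rcases le_or_ge_of_sameQuadrant hm hn hp₀ ht₀ ht (sameQuadrant_iff.2 ⟨k, hk₀, hk⟩)
      with h | h
    · exact h p hp
    · exact hmin (Finset.mem_filter.2 ⟨ht, hk⟩) (fun q => h q q.2) ⟨p, hp⟩
  linarith [hp t₀ ht₀]

lemma exists_add_smul_mem_closedCell {x d : ℝ × ℝ} (hx : x ∈ closedCell m n p₀)
    (hd : ∀ t ∈ posTriples m n p₀, lineForm t x = 0 → 0 ≤ linPart t d) :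
    ∃ δ : ℝ, 0 < δ ∧ x + δ • d ∈ closedCell m n p₀ := by
  have hpath : Tendsto (fun δ : ℝ => x + δ • d) (𝓝[>] 0) (𝓝 x) := by
    have : Continuous fun δ : ℝ => x + δ • d := by fun_prop
    simpa using this.continuousWithinAt.tendsto (x := 0) (s := Ioi 0)
  have hev : ∀ t ∈ posTriples m n p₀, ∀ᶠ δ in 𝓝[>] (0 : ℝ), 0 ≤ lineForm t (x + δ • d) := by
    intro t ht
    rcases (hx t ht).eq_or_lt with h | h
    · filter_upwards [self_mem_nhdsWithin] with δ hδ
      rw [lineForm_add_smul, ← h, zero_add]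
      exact mul_nonneg (le_of_lt hδ) (hd t ht h.symm)
    · exact (((continuous_lineForm t).tendsto x).comp hpath).eventually (lt_mem_nhds h)
        |>.mono fun _ => le_of_lt
  obtain ⟨δ, hδ, hmem⟩ :=
    (eventually_mem_nhdsWithin.and ((Finset.eventually_all _).2 hev)).exists
  exact ⟨δ, hδ, hmem⟩

lemma eq_zero_of_linPart_eq_zero {x d : ℝ × ℝ} (hx : x ∈ extremePoints ℝ (closedCell m n p₀))
    (hd : ∀ t ∈ posTriples m n p₀, lineForm t x = 0 → linPart t d = 0) : d = 0 := by
  obtain ⟨δ₁, hδ₁, h₁⟩ := exists_add_smul_mem_closedCell hx.1 fun t ht h => (hd t ht h).ge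
  obtain ⟨δ₂, hδ₂, h₂⟩ := exists_add_smul_mem_closedCell (d := -d) hx.1 fun t ht h => by
    rw [map_neg, hd t ht h, neg_zero]
  rw [smul_neg, ← sub_eq_add_neg] at h₂
  have := hx.2 h₂ h₁ (mem_openSegment_sub_add x d hδ₂ hδ₁)
  rwa [sub_eq_self, smul_eq_zero, or_iff_right hδ₂.ne'] at this

lemma exists_tight_not_sameQuadrant (hm : 0 < m) (hn : 0 < n) (hp₀ : p₀ ∈ FareyComplex m n)
    {x : ℝ × ℝ} (hx : x ∈ extremePoints ℝ (closedCell m n p₀)) :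
    ∃ t₁ ∈ posTriples m n p₀, ∃ t₂ ∈ posTriples m n p₀, lineForm t₁ x = 0 ∧
      lineForm t₂ x = 0 ∧ ¬SameQuadrant (normal t₁) (normal t₂) := by
  classical
  set A := (posTriples m n p₀).filter fun t => lineForm t x = 0
  have hA : A.Nonempty := by
    by_contra! hA
    have := eq_zero_of_linPart_eq_zero hx (d := ((1 : ℝ), (0 : ℝ))) fun t ht h => by
      have : t ∈ A := Finset.mem_filter.2 ⟨ht, h⟩
      simp [hA] at this
    simp at this
  have hv : ∀ t ∈ A, 0 < linPart t (p₀ - x) := fun t ht => by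
    obtain ⟨ht, hxt⟩ := Finset.mem_filter.1 ht
    rw [linPart_sub, hxt, sub_zero]
    exact (Finset.mem_filter.1 ht).2
  obtain ⟨t₁, ht₁, t₂, ht₂, d₁, d₂, h₁, h₂, h₂₁, h₁₂, hd⟩ :=
    exists_edge_directions A hA linPart hv fun d hd =>
      eq_zero_of_linPart_eq_zero hx fun t ht h => hd t (Finset.mem_filter.2 ⟨ht, h⟩)
  obtain ⟨ht₁, hx₁⟩ := Finset.mem_filter.1 ht₁
  obtain ⟨ht₂, hx₂⟩ := Finset.mem_filter.1 ht₂
  obtain ⟨δ₁, hδ₁, hy₁⟩ := exists_add_smul_mem_closedCell hx.1 fun t ht h =>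
    (hd t (Finset.mem_filter.2 ⟨ht, h⟩)).1
  obtain ⟨δ₂, hδ₂, hy₂⟩ := exists_add_smul_mem_closedCell hx.1 fun t ht h =>
    (hd t (Finset.mem_filter.2 ⟨ht, h⟩)).2
  refine ⟨t₁, ht₁, t₂, ht₂, hx₁, hx₂,
    not_sameQuadrant_of_crossing hm hn hp₀ ht₁ ht₂ hy₁ hy₂ ?_ ?_ ?_ ?_⟩ <;>
    simp only [lineForm_add_smul, hx₁, hx₂, h₁, h₂, mul_zero, add_zero, zero_add]
  exacts [mul_pos hδ₁ h₂₁, mul_pos hδ₂ h₁₂]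

/-- An extreme point is determined by the set of constraints that are tight at it. -/
lemma finite_extremePoints : (extremePoints ℝ (closedCell m n p₀)).Finite := by
  classical
  let tight (x : ℝ × ℝ) := (posTriples m n p₀).filter fun t => lineForm t x = 0
  refine Set.Finite.of_finite_image (f := tight)
    (((posTriples m n p₀).powerset : Set _).toFinite.subset ?_) fun x hx y _ hxy => ?_
  · rintro _ ⟨x, -, rfl⟩
    exact Finset.mem_powerset.2 (Finset.filter_subset _ _)
  · have := eq_zero_of_linPart_eq_zero hx (d := y - x) fun t ht h => by
      have : t ∈ tight y := hxy ▸ Finset.mem_filter.2 ⟨ht, h⟩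
      rw [linPart_sub, (Finset.mem_filter.1 this).2, h, sub_zero]
    exact (sub_eq_zero.1 this).symm

lemma closedCell_eq_convexHull (hm : 0 < m) (hn : 0 < n) (hp₀ : p₀ ∈ FareyComplex m n) :
    closedCell m n p₀ = convexHull ℝ (extremePoints ℝ (closedCell m n p₀)) := by
  have hcompact : IsCompact (closedCell m n p₀) :=
    isCompact_Icc.of_isClosed_subset isClosed_closedCell (closedCell_subset_unitSquare hm hn hp₀)
  exact (closure_convexHull_extremePoints hcompact convex_closedCell).symm.trans
    (finite_extremePoints.isClosed_convexHull ℝ).closure_eq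

lemma ncard_extremePoints_le_four (hm : 0 < m) (hn : 0 < n) (hp₀ : p₀ ∈ FareyComplex m n) :
    (extremePoints ℝ (closedCell m n p₀)).ncard ≤ 4 := by
  classical
  have hfin : (extremePoints ℝ (closedCell m n p₀)).Finite := finite_extremePoints
  rw [Set.ncard_eq_toFinset_card _ hfin]
  choose! t₁ ht₁ t₂ ht₂ hx₁ hx₂ hq using
    fun x (hx : x ∈ extremePoints ℝ (closedCell m n p₀)) =>
      exists_tight_not_sameQuadrant hm hn hp₀ hx
  let r (x : ℝ × ℝ) (k : Fin 4) : Prop := quadrant k (normal (t₁ x)) ∨ quadrant k (normal (t₂ x))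
  have hcount := Finset.card_mul_le_card_mul r (s := hfin.toFinset) (t := Finset.univ)
    (m := 2) (n := 2)
    (fun x hx => ?_) (fun k _ => ?_)
  · simp only [Finset.card_univ, Fintype.card_fin] at hcount
    omega
  · rw [Set.Finite.mem_toFinset] at hx
    obtain ⟨k₁, hk₁⟩ := exists_quadrant (normal (t₁ x))
    obtain ⟨k₂, hk₂⟩ := exists_quadrant (normal (t₂ x))
    have hne : k₁ ≠ k₂ := by
      rintro rfl
      exact hq x hx (sameQuadrant_iff.2 ⟨k₁, hk₁, hk₂⟩)
    exact Finset.one_lt_card.2 ⟨k₁, by simp [r, hk₁], k₂, by simp [r, hk₂], hne⟩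
  · obtain ⟨t₀, ht₀, hline⟩ := exists_common_line hm hn hp₀ k
    refine card_le_two_of_forall_lineForm_eq_zero (s := closedCell m n p₀)
      (mem_fareyTriples.1 ht₀).2.2.2 fun x hx => ?_
    obtain ⟨hxS, hk⟩ := Finset.mem_filter.1 hx
    rw [Set.Finite.mem_toFinset] at hxS
    refine ⟨hxS, ?_⟩
    rcases hk with hk | hk
    · exact hline _ (ht₁ x hxS) hk x hxS.1 (hx₁ x hxS)
    · exact hline _ (ht₂ x hxS) hk x hxS.1 (hx₂ x hxS)

lemma three_le_ncard_extremePoints (hm : 0 < m) (hn : 0 < n) (hp₀ : p₀ ∈ FareyComplex m n) :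
    3 ≤ (extremePoints ℝ (closedCell m n p₀)).ncard := by
  have hfin : (extremePoints ℝ (closedCell m n p₀)).Finite := finite_extremePoints
  rw [Set.ncard_eq_toFinset_card _ hfin]
  set S := hfin.toFinset
  by_contra! hS
  obtain ⟨a, b, hab⟩ : ∃ a b : ℝ × ℝ, (S : Set (ℝ × ℝ)) ⊆ {a, b} := by
    rcases S.eq_empty_or_nonempty with hS₀ | ⟨a, ha⟩
    · exact ⟨0, 0, by simp [hS₀]⟩
    obtain ⟨b, hb⟩ := Finset.card_le_one_iff_subset_singleton.1
      (show (S.erase a).card ≤ 1 by rw [Finset.card_erase_of_mem ha]; omega)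
    refine ⟨a, b, fun x hx => ?_⟩
    by_cases hxa : x = a
    · exact .inl hxa
    · exact .inr (Finset.mem_singleton.1 (hb (Finset.mem_erase.2 ⟨hxa, hx⟩)))
  have hempty := interior_convexHull_eq_empty_of_collinear ((collinear_pair ℝ a b).subset hab)
  rw [Set.Finite.coe_toFinset, ← closedCell_eq_convexHull hm hn hp₀] at hempty
  have : p₀ ∈ interior (closedCell m n p₀) :=
    interior_maximal openCell_subset_closedCell isOpen_openCell mem_openCell_self
  simp [hempty] at this

end Cell

end TajineDaurat

open TajineDaurat

/-- Theorem of Tajine–Daurat: the closure of every connected component of the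
Farey complex `CF(m,n)` is a triangle or a quadrilateral. -/
theorem tajine_daurat (m n : ℕ) (hm : 0 < m) (hn : 0 < n)
    (K : Set (ℝ × ℝ)) (p₀ : ℝ × ℝ) (hp₀ : p₀ ∈ FareyComplex m n)
    (hK : K = connectedComponentIn (FareyComplex m n) p₀) :
    ∃ S : Finset (ℝ × ℝ), (S.card = 3 ∨ S.card = 4) ∧
      closure K = convexHull ℝ (S : Set (ℝ × ℝ)) ∧
      (S : Set (ℝ × ℝ)) = Set.extremePoints ℝ (closure K) := by
  subst hK
  rw [connectedComponentIn_eq_openCell hm hn hp₀, closure_openCell]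
  have hfin : (Set.extremePoints ℝ (closedCell m n p₀)).Finite := finite_extremePoints
  have h₃ := three_le_ncard_extremePoints hm hn hp₀
  have h₄ := ncard_extremePoints_le_four hm hn hp₀
  rw [Set.ncard_eq_toFinset_card _ hfin] at h₃ h₄
  refine ⟨hfin.toFinset, by omega, ?_, hfin.coe_toFinset⟩
  rw [hfin.coe_toFinset]
  exact closedCell_eq_convexHull hm hn hp₀
end
end

section
/- Let K be a connected component of CF(m,n) whose closure is a quadrilateral, with boundary the CPD (A, B, C, D) (counterclockwise). Then it is impossible that B - A lies in the closed quadrant Q_1 and C - B lies in the closed quadrant Q_3. -/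
noncomputable section

/-!
The boundary is convex, so every turn `det2 vₖ vₖ₊₁` between consecutive edge vectors
`vₖ = A (k+1) - A k` is positive. If `v₁ ∈ Q1` and `v₂ ∈ Q3`, the quadrant hypotheses keep
`v₃` and `v₄` out of `Q1 ∪ Q3`, so each lies in `Q2` or `Q4`. A positive turn from `Q3` into
`Q2` is impossible, and so is one from `Q2` into `Q1`; hence `v₃` and `v₄` both lie in `Q4`,
which contradicts the consecutive-edge hypothesis.
-/

section Quadrants

variable {v w : ℝ × ℝ}

theorem Q2_or_Q4_of_not_Q1_of_not_Q3 (h₁ : ¬ Q1 v) (h₃ : ¬ Q3 v) : Q2 v ∨ Q4 v := by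
  unfold Q1 Q2 Q3 Q4 at *
  rcases le_total v.1 0 with hx | hx <;> rcases le_total v.2 0 with hy | hy <;> tauto

theorem det2_nonpos_of_Q3_of_Q2 (hv : Q3 v) (hw : Q2 w) : det2 v w ≤ 0 := by
  unfold det2
  linarith [mul_nonpos_of_nonpos_of_nonneg hv.1 hw.2, mul_nonneg_of_nonpos_of_nonpos hv.2 hw.1]

theorem det2_nonpos_of_Q2_of_Q1 (hv : Q2 v) (hw : Q1 w) : det2 v w ≤ 0 := by
  unfold det2
  linarith [mul_nonpos_of_nonpos_of_nonneg hv.1 hw.2, mul_nonneg hv.2 hw.1]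

end Quadrants

section CPD

variable {n : ℕ} {A : ℤ → ℝ × ℝ}

theorem det2_sub_sub_sub (a b c : ℝ × ℝ) : det2 (b - a) (c - a) = det2 (b - a) (c - b) := by
  simp only [det2, Prod.fst_sub, Prod.snd_sub]
  ring

theorem IsCPD.det2_edge_edge_pos (hA : IsCPD n A) {p : ℤ} (hp₀ : 0 ≤ p) (hp : p + 2 ≤ n - 1) :
    0 < det2 (A (p + 1) - A p) (A (p + 2) - A (p + 1)) := by
  rw [← det2_sub_sub_sub]
  exact hA.2.2 p (p + 2) hp₀ (by omega) (by omega) hp (by omega) (by omega)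

theorem IsCPD.det2_last_edge_first_edge_pos (hA : IsCPD n A) :
    0 < det2 (A 0 - A (n - 1)) (A 1 - A 0) := by
  obtain ⟨hn, hper, hdet⟩ := hA
  have h := hdet (n - 1) 1 (by omega) le_rfl le_rfl (by omega) (by omega) (by omega)
  rwa [sub_add_cancel, det2_sub_sub_sub, ← zero_add (n : ℤ), hper, zero_add] at h

end CPD

theorem quadrilateral_no_opposite_consecutive_general
    (A : ℤ → ℝ × ℝ) (hA : IsCPD 4 A)
    (hcons : ∀ k : ℤ, ¬ SameQuadrant (A (k + 1) - A k) (A (k + 2) - A (k + 1)))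
    (hopp₁ : ¬ SameQuadrant (A 1 - A 0) (A 3 - A 2))
    (hopp₂ : ¬ SameQuadrant (A 2 - A 1) (A 0 - A 3)) :
    ¬ (Q1 (A 1 - A 0) ∧ Q3 (A 2 - A 1)) := by
  rintro ⟨h₁, h₂⟩
  have hA4 : A 4 = A 0 := by simpa using hA.2.1 0
  have hA5 : A 5 = A 1 := by simpa using hA.2.1 1
  have hc₁ := hcons 1
  have hc₂ := hcons 2
  have hc₃ := hcons 3
  norm_num [hA4, hA5] at hc₁ hc₂ hc₃
  have h₃ : Q2 (A 3 - A 2) ∨ Q4 (A 3 - A 2) := Q2_or_Q4_of_not_Q1_of_not_Q3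
    (fun h => hopp₁ (.inl ⟨h₁, h⟩)) (fun h => hc₁ (.inr (.inr (.inl ⟨h₂, h⟩))))
  have h₄ : Q2 (A 0 - A 3) ∨ Q4 (A 0 - A 3) := Q2_or_Q4_of_not_Q1_of_not_Q3
    (fun h => hc₃ (.inl ⟨h, h₁⟩)) (fun h => hopp₂ (.inr (.inr (.inl ⟨h₂, h⟩))))
  have h₂₃ : 0 < det2 (A 2 - A 1) (A 3 - A 2) := by
    simpa using hA.det2_edge_edge_pos (p := 1) (by norm_num) (by norm_num)
  have h₄₁ : 0 < det2 (A 0 - A 3) (A 1 - A 0) := by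
    simpa using hA.det2_last_edge_first_edge_pos
  rcases h₃ with h₃ | h₃
  · exact (det2_nonpos_of_Q3_of_Q2 h₂ h₃).not_gt h₂₃
  rcases h₄ with h₄ | h₄
  · exact (det2_nonpos_of_Q2_of_Q1 h₄ h₁).not_gt h₄₁
  exact hc₂ (.inr (.inr (.inr ⟨h₃, h₄⟩)))

/-- For a connected component of the Farey complex whose closure is a
quadrilateral with counterclockwise boundary CPD `(A, B, C, D)`, the
configuration `B - A ∈ Q1` and `C - B ∈ Q3` is impossible.  (The established
facts that consecutive edge vectors, and opposite edge vectors, are never in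
the same quadrant are available as hypotheses.) -/
theorem quadrilateral_no_opposite_consecutive (m n : ℕ) (hm : 0 < m) (hn : 0 < n)
    (K : Set (ℝ × ℝ)) (p₀ : ℝ × ℝ) (hp₀ : p₀ ∈ FareyComplex m n)
    (hK : K = connectedComponentIn (FareyComplex m n) p₀)
    (A : ℤ → ℝ × ℝ) (hA : IsCPD 4 A)
    (hfr : frontier (closure K) = Polyline 4 A)
    (hcons : ∀ k : ℤ, ¬ SameQuadrant (A (k + 1) - A k) (A (k + 2) - A (k + 1)))
    (hopp₁ : ¬ SameQuadrant (A 1 - A 0) (A 3 - A 2))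
    (hopp₂ : ¬ SameQuadrant (A 2 - A 1) (A 0 - A 3)) :
    ¬ (Q1 (A 1 - A 0) ∧ Q3 (A 2 - A 1)) :=
  quadrilateral_no_opposite_consecutive_general A hA hcons hopp₁ hopp₂
end
end

section
/- Let K be a connected component of CF(m,n) whose closure is a quadrilateral, represented by the CPD (A_k)_{k∈ℤ} of period 4. Then there exists an integer p such that for each i ∈ {1,2,3,4}, the edge vector A_{p+i} - A_{p+i-1} lies in the quadrant Q_i. -/
noncomputable section

/-- Two vectors lie in opposite closed quadrants. -/
def OppositeQuadrants (v w : ℝ × ℝ) : Prop :=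
  (Q1 v ∧ Q3 w) ∨ (Q3 v ∧ Q1 w) ∨ (Q2 v ∧ Q4 w) ∨ (Q4 v ∧ Q2 w)

/-!
Consecutive edges of a convex polygon traversed counterclockwise make a left turn,
`0 < det2 e f`, and a left turn never takes a vector into the quadrant preceding its own.
So once `e` and `f` neither share a quadrant nor lie in opposite ones, `f` lies in the quadrant
following that of `e`: the edge vectors go round `Q1 → Q2 → Q3 → Q4`, starting from any edge
in `Q1`.
-/

theorem IsCPD.det2_edge_pos {n : ℕ} {A : ℤ → ℝ × ℝ} (hA : IsCPD n A) (k : ℤ) :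
    0 < det2 (A (k + 1) - A k) (A (k + 2) - A (k + 1)) := by
  obtain ⟨hn, hper, hpos⟩ := hA
  have hn0 : (0 : ℤ) < n := by omega
  suffices h : ∀ r : ℤ, 0 ≤ r → r ≤ n - 1 →
      0 < det2 (A (r + 1) - A r) (A (r + 2) - A (r + 1)) by
    have hmod : ∀ j, A (k % n + j) = A (k + j) := fun j => by
      rw [← (show Function.Periodic A n from hper).int_mul (k / n) (k % n + j), Int.cast_id]
      congr 1
      linear_combination Int.mul_ediv_add_emod k n
    have h := h (k % n) (Int.emod_nonneg k hn0.ne') (by linarith [Int.emod_lt_of_pos k hn0])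
    rwa [hmod 1, hmod 2, show A (k % n) = A k by simpa using hmod 0] at h
  intro r hr0 hr1
  have hchord : ∀ a b c : ℝ × ℝ, det2 (b - a) (c - b) = det2 (b - a) (c - a) := by
    intro a b c
    simp only [det2, Prod.fst_sub, Prod.snd_sub]
    ring
  -- `IsCPD` only tests vertices `A q` with `1 ≤ q`, so the turns at `A (n - 1)` and `A n = A 0`
  -- are read off from the edge `(A (n - 1), A n)`.
  rcases (show r ≤ n - 3 ∨ r = n - 2 ∨ r = n - 1 by omega) with hr | rfl | rfl
  · rw [hchord]
    exact hpos r (r + 2) hr0 (by omega) (by omega) (by omega) (by omega) (by omega)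
  · have h := hpos (n - 1) (n - 2) (by omega) le_rfl (by omega) (by omega) (by omega) (by omega)
    rw [show (n : ℤ) - 2 + 1 = n - 1 by ring, show (n : ℤ) - 2 + 2 = n - 1 + 1 by ring]
    convert h using 1
    simp only [det2, Prod.fst_sub, Prod.snd_sub]
    ring
  · have h := hpos (n - 1) 1 (by omega) le_rfl le_rfl (by omega) (by omega) (by omega)
    rwa [show (n : ℤ) - 1 + 2 = 1 + n by ring, hper, hchord]

lemma Q1_or_Q2_or_Q3_or_Q4 (v : ℝ × ℝ) : Q1 v ∨ Q2 v ∨ Q3 v ∨ Q4 v := by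
  unfold Q1 Q2 Q3 Q4
  rcases le_total 0 v.1 with h1 | h1 <;> rcases le_total 0 v.2 with h2 | h2 <;> tauto

section TurnLeft

variable {e f : ℝ × ℝ}

lemma Q2_of_Q1_of_det2_pos (hs : ¬ SameQuadrant e f) (ho : ¬ OppositeQuadrants e f)
    (hd : 0 < det2 e f) (he : Q1 e) : Q2 f := by
  unfold SameQuadrant OppositeQuadrants at *
  rcases Q1_or_Q2_or_Q3_or_Q4 f with hf | hf | hf | hf
  · tauto
  · exact hf
  · tauto
  · unfold Q1 Q4 det2 at *; nlinarith

lemma Q3_of_Q2_of_det2_pos (hs : ¬ SameQuadrant e f) (ho : ¬ OppositeQuadrants e f)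
    (hd : 0 < det2 e f) (he : Q2 e) : Q3 f := by
  unfold SameQuadrant OppositeQuadrants at *
  rcases Q1_or_Q2_or_Q3_or_Q4 f with hf | hf | hf | hf
  · unfold Q1 Q2 det2 at *; nlinarith
  · tauto
  · exact hf
  · tauto

lemma Q4_of_Q3_of_det2_pos (hs : ¬ SameQuadrant e f) (ho : ¬ OppositeQuadrants e f)
    (hd : 0 < det2 e f) (he : Q3 e) : Q4 f := by
  unfold SameQuadrant OppositeQuadrants at *
  rcases Q1_or_Q2_or_Q3_or_Q4 f with hf | hf | hf | hf
  · tauto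
  · unfold Q2 Q3 det2 at *; nlinarith
  · tauto
  · exact hf

lemma Q1_of_Q4_of_det2_pos (hs : ¬ SameQuadrant e f) (ho : ¬ OppositeQuadrants e f)
    (hd : 0 < det2 e f) (he : Q4 e) : Q1 f := by
  unfold SameQuadrant OppositeQuadrants at *
  rcases Q1_or_Q2_or_Q3_or_Q4 f with hf | hf | hf | hf
  · exact hf
  · tauto
  · unfold Q3 Q4 det2 at *; nlinarith
  · tauto

end TurnLeft

lemma exists_Q1_Q2_Q3_Q4 (e : ℤ → ℝ × ℝ)
    (h12 : ∀ k, Q1 (e k) → Q2 (e (k + 1))) (h23 : ∀ k, Q2 (e k) → Q3 (e (k + 1)))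
    (h34 : ∀ k, Q3 (e k) → Q4 (e (k + 1))) (h41 : ∀ k, Q4 (e k) → Q1 (e (k + 1))) :
    ∃ p, Q1 (e p) ∧ Q2 (e (p + 1)) ∧ Q3 (e (p + 2)) ∧ Q4 (e (p + 3)) := by
  obtain ⟨p, hp⟩ : ∃ p, Q1 (e p) := by
    rcases Q1_or_Q2_or_Q3_or_Q4 (e 0) with h | h | h | h
    · exact ⟨0, h⟩
    · exact ⟨0 + 1 + 1 + 1, h41 _ (h34 _ (h23 _ h))⟩
    · exact ⟨0 + 1 + 1, h41 _ (h34 _ h)⟩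
    · exact ⟨0 + 1, h41 _ h⟩
  have hp2 := h23 _ (h12 _ hp)
  have hp3 := h34 _ hp2
  exact ⟨p, hp, h12 _ hp, by simpa [add_assoc] using hp2, by simpa [add_assoc] using hp3⟩

theorem quadrilateral_edge_quadrants_general
    (A : ℤ → ℝ × ℝ) (hA : IsCPD 4 A)
    (hcons : ∀ k : ℤ, ¬ SameQuadrant (A (k + 1) - A k) (A (k + 2) - A (k + 1)))
    (hnoOpp : ∀ k : ℤ, ¬ OppositeQuadrants (A (k + 1) - A k) (A (k + 2) - A (k + 1))) :
    ∃ p : ℤ, Q1 (A (p + 1) - A p) ∧ Q2 (A (p + 2) - A (p + 1)) ∧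
      Q3 (A (p + 3) - A (p + 2)) ∧ Q4 (A (p + 4) - A (p + 3)) := by
  have turn := hA.det2_edge_pos
  obtain ⟨p, hp⟩ := exists_Q1_Q2_Q3_Q4 (fun k => A (k + 1) - A k)
    (fun k h => by simpa [add_assoc] using Q2_of_Q1_of_det2_pos (hcons k) (hnoOpp k) (turn k) h)
    (fun k h => by simpa [add_assoc] using Q3_of_Q2_of_det2_pos (hcons k) (hnoOpp k) (turn k) h)
    (fun k h => by simpa [add_assoc] using Q4_of_Q3_of_det2_pos (hcons k) (hnoOpp k) (turn k) h)
    (fun k h => by simpa [add_assoc] using Q1_of_Q4_of_det2_pos (hcons k) (hnoOpp k) (turn k) h)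
  exact ⟨p, by simpa [add_assoc] using hp⟩

/-- If the closure of a connected component of the Farey complex is a
quadrilateral, represented by the CPD `(A_k)` of period 4, then some shift `p`
puts the four edge vectors in the quadrants `Q1, Q2, Q3, Q4` in this order. -/
theorem quadrilateral_edge_quadrants (m n : ℕ) (hm : 0 < m) (hn : 0 < n)
    (K : Set (ℝ × ℝ)) (p₀ : ℝ × ℝ) (hp₀ : p₀ ∈ FareyComplex m n)
    (hK : K = connectedComponentIn (FareyComplex m n) p₀)
    (A : ℤ → ℝ × ℝ) (hA : IsCPD 4 A)
    (hfr : frontier (closure K) = Polyline 4 A)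
    (hcons : ∀ k : ℤ, ¬ SameQuadrant (A (k + 1) - A k) (A (k + 2) - A (k + 1)))
    (hopp₁ : ¬ SameQuadrant (A 1 - A 0) (A 3 - A 2))
    (hopp₂ : ¬ SameQuadrant (A 2 - A 1) (A 0 - A 3))
    (hnoOpp : ∀ k : ℤ, ¬ OppositeQuadrants (A (k + 1) - A k) (A (k + 2) - A (k + 1))) :
    ∃ p : ℤ, Q1 (A (p + 1) - A p) ∧ Q2 (A (p + 2) - A (p + 1)) ∧
      Q3 (A (p + 3) - A (p + 2)) ∧ Q4 (A (p + 4) - A (p + 3)) :=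
  quadrilateral_edge_quadrants_general A hA hcons hnoOpp
end
end

section
/- Let K be a compact convex subset of ℝ² that is the intersection of finitely many closed half-planes, is bounded, and has nonempty interior (a polygon convexe, PC). Then there exists a CPD (A_k)_{k∈ℤ} with some period p ≥ 3 such that the boundary of K equals the union of the segments [A_k, A_{k+1}] for 0 ≤ k ≤ p-1. -/
noncomputable section

/-- A closed half-plane of the plane. -/
def IsClosedHalfPlane (P : Set (ℝ × ℝ)) : Prop :=
  ∃ a b c : ℝ, (a, b) ≠ (0, 0) ∧ P = {p : ℝ × ℝ | a * p.1 + b * p.2 ≤ c}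

/-- A convex polygon (PC): a bounded intersection of finitely many closed
half-planes with nonempty interior. -/
def IsPC (K : Set (ℝ × ℝ)) : Prop :=
  (∃ X : Set (Set (ℝ × ℝ)), X.Finite ∧ (∀ P ∈ X, IsClosedHalfPlane P) ∧
    K = ⋂₀ X) ∧
  Bornology.IsBounded K ∧ (interior K).Nonempty

/-!
A convex polygon `K` is compact and convex with finitely many extreme points, so by
Krein–Milman it is the convex hull of them. Sorting the extreme points by polar angle around an
interior point `O` and repeating the list periodically gives the candidate `A`, with angles `Θ`
lifted to `ℝ` so that they grow by `2π` per period. Since `O` is interior, consecutive angles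
differ by less than `π`, which forces `p ≥ 3`. If a vertex lay weakly to the right of an edge
`[A i, A (i+1)]`, the segment from `O` to it would cross the line of the edge inside `K`, hence
(by extremality) inside the edge itself, and the vertex would lie in the closed angular sector of
that edge, which contains no other vertex. So `K` lies to the left of every edge and the edges lie
on the boundary; conversely a boundary point lies in the sector of some edge, and there it must
be on the edge, as the points of the sector strictly left of the edge are interior.
-/

open Real Filter Topology

lemma eventually_add_smul_mem_of_mem_interior {E : Type*} [AddCommGroup E] [Module ℝ E]
    [TopologicalSpace E] [ContinuousAdd E] [ContinuousSMul ℝ E] {s : Set E} {x : E}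
    (hx : x ∈ interior s) (v : E) : ∀ᶠ t in 𝓝 (0 : ℝ), x + t • v ∈ s :=
  ((continuous_const.add (continuous_id.smul continuous_const)).tendsto' 0 x
    (by simp)).eventually (mem_interior_iff_mem_nhds.1 hx)

def dirVec (θ : ℝ) : ℝ × ℝ := (cos θ, sin θ)

def polarAngle (u : ℝ × ℝ) : ℝ := Complex.arg ⟨u.1, u.2⟩

lemma det2_smul_dirVec (r s a b : ℝ) :
    det2 (r • dirVec a) (s • dirVec b) = r * s * sin (b - a) := by
  simp only [det2, dirVec, Prod.smul_fst, Prod.smul_snd, smul_eq_mul, sin_sub]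
  ring

lemma dirVec_ne_zero (θ : ℝ) : dirVec θ ≠ 0 := by
  intro h
  have h₁ : cos θ = 0 := congrArg Prod.fst h
  have h₂ : sin θ = 0 := congrArg Prod.snd h
  simpa [h₁, h₂] using sin_sq_add_cos_sq θ

lemma exists_pos_eq_smul_dirVec {u : ℝ × ℝ} (hu : u ≠ 0) :
    ∃ r : ℝ, 0 < r ∧ u = r • dirVec (polarAngle u) := by
  refine ⟨‖(⟨u.1, u.2⟩ : ℂ)‖, norm_pos_iff.2 fun h => hu ?_, ?_⟩
  · exact Prod.ext (congrArg Complex.re h) (congrArg Complex.im h)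
  · ext
    · exact (Complex.norm_mul_cos_arg ⟨u.1, u.2⟩).symm
    · exact (Complex.norm_mul_sin_arg ⟨u.1, u.2⟩).symm

lemma fst_sq_add_snd_sq_pos {d : ℝ × ℝ} (hd : d ≠ 0) : 0 < d.1 ^ 2 + d.2 ^ 2 := by
  by_contra h
  have h₁ := sq_nonneg d.1
  have h₂ := sq_nonneg d.2
  exact hd (Prod.ext (pow_eq_zero_iff two_ne_zero |>.1 (by linarith))
    (pow_eq_zero_iff two_ne_zero |>.1 (by linarith)))

lemma exists_eq_smul_of_det2_eq_zero {u w : ℝ × ℝ} (hu : u ≠ 0) (h : det2 u w = 0) :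
    ∃ t : ℝ, w = t • u := by
  have hu' := fst_sq_add_snd_sq_pos hu
  simp only [det2] at h
  refine ⟨(u.1 * w.1 + u.2 * w.2) / (u.1 ^ 2 + u.2 ^ 2), Prod.ext ?_ ?_⟩ <;>
    simp only [Prod.smul_fst, Prod.smul_snd, smul_eq_mul] <;> field_simp
  · linear_combination (-u.2) * h
  · linear_combination u.1 * h

lemma polarAngle_mem_Ioc (u : ℝ × ℝ) : polarAngle u ∈ Set.Ioc (-π) π :=
  ⟨Complex.neg_pi_lt_arg _, Complex.arg_le_pi _⟩

lemma exists_pos_smul_of_polarAngle_eq {u w : ℝ × ℝ} (hu : u ≠ 0) (hw : w ≠ 0)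
    (h : polarAngle u = polarAngle w) : ∃ t : ℝ, 0 < t ∧ w = t • u := by
  obtain ⟨r, hr, hu'⟩ := exists_pos_eq_smul_dirVec hu
  obtain ⟨s, hs, hw'⟩ := exists_pos_eq_smul_dirVec hw
  refine ⟨s / r, div_pos hs hr, ?_⟩
  rw [hw', hu', h, smul_smul, div_mul_cancel₀ _ hr.ne']

lemma det2_sub_sub_eq (O a b x : ℝ × ℝ) :
    det2 (b - a) (x - a) =
      det2 (a - O) (b - O) - det2 (x - O) (b - O) - det2 (a - O) (x - O) := by
  simp only [det2, Prod.fst_sub, Prod.snd_sub]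
  ring

lemma convex_det2_nonneg (d a : ℝ × ℝ) : Convex ℝ {x | 0 ≤ det2 d (x - a)} := by
  intro x hx y hy s t hs ht hst
  simp only [Set.mem_ofPred_eq, det2, Prod.fst_sub, Prod.snd_sub, Prod.fst_add, Prod.snd_add,
    Prod.smul_fst, Prod.smul_snd, smul_eq_mul] at hx hy ⊢
  have : d.1 * (s * x.2 + t * y.2 - a.2) - d.2 * (s * x.1 + t * y.1 - a.1) =
      s * (d.1 * (x.2 - a.2) - d.2 * (x.1 - a.1)) +
        t * (d.1 * (y.2 - a.2) - d.2 * (y.1 - a.1)) := by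
    linear_combination (d.1 * a.2 - d.2 * a.1) * hst
  rw [this]
  positivity

lemma eq_det2_div_smul_add {u v : ℝ × ℝ} (hD : det2 u v ≠ 0) (y : ℝ × ℝ) :
    y = (det2 y v / det2 u v) • u + (det2 u y / det2 u v) • v := by
  simp only [det2] at hD ⊢
  ext <;> simp only [Prod.fst_add, Prod.snd_add, Prod.smul_fst, Prod.smul_snd, smul_eq_mul] <;>
    rw [div_mul_eq_mul_div, div_mul_eq_mul_div, ← add_div, eq_div_iff hD] <;> ring

lemma det2_smul_dirVec_nonneg_iff {r s : ℝ} (hr : 0 < r) (hs : 0 < s) (a b : ℝ) :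
    0 ≤ det2 (r • dirVec a) (s • dirVec b) ↔ 0 ≤ sin (b - a) := by
  rw [det2_smul_dirVec, mul_nonneg_iff_of_pos_left (mul_pos hr hs)]

lemma det2_smul_dirVec_pos_iff {r s : ℝ} (hr : 0 < r) (hs : 0 < s) (a b : ℝ) :
    0 < det2 (r • dirVec a) (s • dirVec b) ↔ 0 < sin (b - a) := by
  rw [det2_smul_dirVec, mul_pos_iff_of_pos_left (mul_pos hr hs)]

section AngleSequence

variable {p : ℕ} {Θ : ℤ → ℝ}

lemma period_pos (hper : ∀ k, Θ (k + p) = Θ k + 2 * π) : 0 < p := by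
  by_contra h
  have := hper 0
  simp only [Nat.eq_zero_of_not_pos h, Nat.cast_zero, add_zero, left_eq_add] at this
  exact two_pi_pos.ne' this

lemma angle_add_mul_period (hper : ∀ k, Θ (k + p) = Θ k + 2 * π) (k m : ℤ) :
    Θ (k + m * p) = Θ k + m * (2 * π) := by
  induction m using Int.induction_on with
  | zero => simp
  | succ m ih =>
    rw [show k + (m + 1) * p = k + m * p + p by ring, hper, ih]
    push_cast; ring
  | pred m ih =>
    have h := hper (k + (-(m : ℤ) - 1) * p)
    rw [show k + (-(m : ℤ) - 1) * p + p = k + -(m : ℤ) * p by ring, ih] at h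
    push_cast at h ⊢
    linarith

lemma exists_mem_Ico_add_mul (hp : 0 < p) (k i : ℤ) :
    ∃ j m : ℤ, i ≤ j ∧ j < i + p ∧ k = j + m * p := by
  have h₀ := Int.emod_nonneg (k - i) (Int.natCast_ne_zero.2 hp.ne')
  have h₁ := Int.emod_lt_of_pos (k - i) (Int.natCast_pos.2 hp)
  refine ⟨i + (k - i) % p, (k - i) / p, by omega, by omega, ?_⟩
  linear_combination (Int.emod_add_ediv_mul (k - i) p).symm

lemma angle_succ_sub_lt_pi (hΘ : StrictMono Θ) (hper : ∀ k, Θ (k + p) = Θ k + 2 * π)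
    (hcover : ∀ α, ∃ k, 0 < sin (Θ k - α)) (i : ℤ) :
    Θ (i + 1) - Θ i < π := by
  by_contra hgap
  obtain ⟨k, hk⟩ := hcover (Θ i)
  obtain ⟨j, m, hij, hji, rfl⟩ := exists_mem_Ico_add_mul (period_pos hper) k i
  rw [angle_add_mul_period hper, add_sub_right_comm, sin_add_int_mul_two_pi] at hk
  rcases hij.eq_or_lt with rfl | hij
  · simp at hk
  · have h₁ : Θ (i + 1) ≤ Θ j := hΘ.monotone (by omega)
    have h₂ : Θ j < Θ i + 2 * π := hper i ▸ hΘ hji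
    have : 0 ≤ sin (Θ j - Θ i - π) := sin_nonneg_of_nonneg_of_le_pi (by linarith) (by linarith)
    rw [sin_sub_pi] at this
    linarith

lemma three_le_period (hper : ∀ k, Θ (k + p) = Θ k + 2 * π)
    (hgap : ∀ i, Θ (i + 1) - Θ i < π) : 3 ≤ p := by
  have key : ∀ n : ℕ, Θ (n + 1) < Θ 0 + (n + 1) * π := by
    intro n
    induction n with
    | zero =>
      have := hgap 0
      simp only [CharP.cast_eq_zero, zero_add] at this ⊢
      linarith
    | succ n ih =>
      have := hgap (n + 1)
      push_cast at ih ⊢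
      linarith
  obtain ⟨n, rfl⟩ : ∃ n, p = n + 1 := ⟨p - 1, by have := period_pos hper; omega⟩
  have h := hper 0
  have hn := key n
  push_cast at h hn
  rw [zero_add] at h
  have : (2 : ℝ) < n + 1 := by nlinarith [pi_pos]
  exact_mod_cast this

lemma dvd_of_sin_nonneg (hΘ : StrictMono Θ) (hper : ∀ k, Θ (k + p) = Θ k + 2 * π) {i k : ℤ}
    (h₁ : 0 ≤ sin (Θ k - Θ i)) (h₂ : 0 ≤ sin (Θ (i + 1) - Θ k)) :
    (p : ℤ) ∣ k - i ∨ (p : ℤ) ∣ k - (i + 1) := by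
  obtain ⟨j, m, hij, hji, rfl⟩ := exists_mem_Ico_add_mul (period_pos hper) k i
  rw [angle_add_mul_period hper, add_sub_right_comm, sin_add_int_mul_two_pi] at h₁
  rw [angle_add_mul_period hper, sub_add_eq_sub_sub, sin_sub_int_mul_two_pi] at h₂
  rcases hij.eq_or_lt with rfl | hij
  · exact Or.inl ⟨m, by ring⟩
  · have hj : Θ j - Θ i ≤ π := by
      by_contra h
      have : sin (Θ j - Θ i - 2 * π) < 0 :=
        sin_neg_of_neg_of_neg_pi_lt (by linarith [hper i ▸ hΘ hji]) (by linarith)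
      rw [sin_sub_two_pi] at this
      linarith
    have hle : Θ (i + 1) ≤ Θ j := hΘ.monotone (by omega)
    have heq : Θ (i + 1) = Θ j := by
      by_contra hne
      have : sin (Θ (i + 1) - Θ j) < 0 :=
        sin_neg_of_neg_of_neg_pi_lt (by linarith [lt_of_le_of_ne hle hne])
          (by linarith [hΘ (lt_add_one i)])
      linarith
    rw [← hΘ.injective heq]
    exact Or.inr ⟨m, by ring⟩

lemma exists_sin_sub_nonneg (hΘ : StrictMono Θ) (hper : ∀ k, Θ (k + p) = Θ k + 2 * π)
    (hgap : ∀ i, Θ (i + 1) - Θ i < π) (φ : ℝ) :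
    ∃ i, 0 ≤ sin (φ - Θ i) ∧ 0 ≤ sin (Θ (i + 1) - φ) := by
  set m := ⌊(φ - Θ 0) / (2 * π)⌋
  have hm := Int.floor_le ((φ - Θ 0) / (2 * π))
  have hm' := Int.lt_floor_add_one ((φ - Θ 0) / (2 * π))
  rw [le_div_iff₀ two_pi_pos] at hm
  rw [div_lt_iff₀ two_pi_pos] at hm'
  have hlow : Θ (m * p) ≤ φ := by
    have := angle_add_mul_period hper 0 m
    rw [zero_add] at this
    linarith
  have hup : φ < Θ ((m + 1) * p) := by
    have := angle_add_mul_period hper 0 (m + 1)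
    rw [zero_add] at this
    push_cast at this
    linarith
  obtain ⟨i, hi, hmax⟩ := Int.exists_greatest_of_bdd (P := fun z => Θ z ≤ φ)
    ⟨(m + 1) * p, fun z hz => (hΘ.lt_iff_lt.1 (hz.trans_lt hup)).le⟩ ⟨m * p, hlow⟩
  have hnext : φ < Θ (i + 1) := by
    by_contra h
    have := hmax _ (not_lt.1 h)
    omega
  exact ⟨i, sin_nonneg_of_nonneg_of_le_pi (by linarith) (by linarith [hgap i]),
    sin_nonneg_of_nonneg_of_le_pi (by linarith) (by linarith [hgap i])⟩

end AngleSequence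

section ConvexGeometry

variable {K : Set (ℝ × ℝ)}

lemma det2_pos_of_mem_interior {d a x : ℝ × ℝ} (hd : d ≠ 0)
    (hK : ∀ y ∈ K, 0 ≤ det2 d (y - a)) (hx : x ∈ interior K) : 0 < det2 d (x - a) := by
  set n : ℝ × ℝ := (d.2, -d.1)
  obtain ⟨t, htK, ht⟩ := (((eventually_add_smul_mem_of_mem_interior hx n).filter_mono
    (nhdsWithin_le_nhds (s := Set.Ioi 0))).and self_mem_nhdsWithin).exists
  have key : det2 d (x + t • n - a) = det2 d (x - a) - t * (d.1 ^ 2 + d.2 ^ 2) := by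
    simp only [det2, n, Prod.fst_sub, Prod.snd_sub, Prod.fst_add, Prod.snd_add, Prod.smul_fst,
      Prod.smul_snd, smul_eq_mul]
    ring
  have := hK _ htK
  nlinarith [fst_sq_add_snd_sq_pos hd]

lemma exists_det2_pos_of_mem_interior {V : Set (ℝ × ℝ)} (hKV : K ⊆ convexHull ℝ V)
    {O d : ℝ × ℝ} (hO : O ∈ interior K) (hd : d ≠ 0) : ∃ v ∈ V, 0 < det2 d (v - O) := by
  by_contra! h
  have hK : ∀ y ∈ K, 0 ≤ det2 (-d) (y - O) := fun y hy =>
    convexHull_min (fun v hv => by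
        have := h v hv
        simp only [Set.mem_ofPred_eq, det2, Prod.fst_neg, Prod.snd_neg] at this ⊢
        linarith) (convex_det2_nonneg _ _) (hKV hy)
  simpa [det2] using det2_pos_of_mem_interior (neg_ne_zero.2 hd) hK hO

lemma add_smul_sub_notMem {a b : ℝ × ℝ} (ha : a ∈ K) (hb : b ∈ K.extremePoints ℝ)
    (hab : a ≠ b) {t : ℝ} (ht : 1 < t) : a + t • (b - a) ∉ K := by
  intro hx
  have hb' : b ∈ openSegment ℝ a (a + t • (b - a)) := by
    rw [openSegment_eq_image']
    refine ⟨t⁻¹, ⟨by positivity, inv_lt_one_of_one_lt₀ ht⟩, ?_⟩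
    dsimp only
    rw [add_sub_cancel_left, smul_smul, inv_mul_cancel₀ (by positivity), one_smul,
      add_sub_cancel]
  exact hab (hb.2 ha hx hb')

lemma mem_segment_of_det2_eq_zero {a b x : ℝ × ℝ} (ha : a ∈ K.extremePoints ℝ)
    (hb : b ∈ K.extremePoints ℝ) (hab : a ≠ b) (hx : x ∈ K) (h : det2 (b - a) (x - a) = 0) :
    x ∈ segment ℝ a b := by
  obtain ⟨t, ht⟩ := exists_eq_smul_of_det2_eq_zero (sub_ne_zero.2 hab.symm) h
  have hx' : x = a + t • (b - a) := by rw [← ht]; abel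
  have h₁ : t ≤ 1 := by
    by_contra h₁
    exact add_smul_sub_notMem ha.1 hb hab (not_le.1 h₁) (hx' ▸ hx)
  have h₀ : 0 ≤ t := by
    by_contra h₀
    refine add_smul_sub_notMem hb.1 ha hab.symm (t := 1 - t) (by linarith) ?_
    convert hx using 1
    rw [hx']
    module
  rw [segment_eq_image']
  exact ⟨t, ⟨h₀, h₁⟩, hx'.symm⟩

lemma eq_of_sub_eq_smul_sub {O v w : ℝ × ℝ} (hO : O ∈ interior K)
    (hv : v ∈ K.extremePoints ℝ) (hw : w ∈ K.extremePoints ℝ) {t : ℝ} (ht : 0 < t)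
    (h : w - O = t • (v - O)) : v = w := by
  have hOK := interior_subset hO
  have hOext := (disjoint_interior_extremePoints K).notMem_of_mem_left hO
  rcases lt_trichotomy t 1 with ht₁ | rfl | ht₁
  · refine absurd hv.1 ?_
    convert add_smul_sub_notMem hOK hw (fun h => hOext (h ▸ hw))
      (one_lt_inv_iff₀.2 ⟨ht, ht₁⟩) using 1
    rw [h, smul_smul, inv_mul_cancel₀ ht.ne', one_smul, add_sub_cancel]
  · simpa using h.symm
  · refine absurd hw.1 ?_
    convert add_smul_sub_notMem hOK hv (fun h => hOext (h ▸ hv)) ht₁ using 1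
    rw [← h, add_sub_cancel]

lemma ne_of_det2_sub_pos {O a b : ℝ × ℝ} (hD : 0 < det2 (a - O) (b - O)) : a ≠ b := by
  rintro rfl
  simp [det2, mul_comm] at hD

lemma det2_nonneg_of_det2_nonpos {O a b w : ℝ × ℝ} (hconv : Convex ℝ K) (hOK : O ∈ K)
    (ha : a ∈ K.extremePoints ℝ) (hb : b ∈ K.extremePoints ℝ) (hD : 0 < det2 (a - O) (b - O))
    (hw : w ∈ K) (hf : det2 (b - a) (w - a) ≤ 0) :
    0 ≤ det2 (a - O) (w - O) ∧ 0 ≤ det2 (w - O) (b - O) := by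
  set D := det2 (a - O) (b - O)
  set s := D / (D - det2 (b - a) (w - a))
  have hs₀ : 0 < s := div_pos hD (by linarith)
  have hs₁ : s ≤ 1 := (div_le_one (by linarith)).2 (by linarith)
  -- `O + s • (w - O)` is where the segment `[O, w]` crosses the line `ab`
  have hz : O + s • (w - O) ∈ K := hconv.add_smul_sub_mem hOK hw ⟨hs₀.le, hs₁⟩
  have hfz : det2 (b - a) (O + s • (w - O) - a) = 0 := by
    have e : det2 (b - a) (O + s • (w - O) - a) = D - s * (D - det2 (b - a) (w - a)) := by
      simp only [D, det2, Prod.fst_sub, Prod.snd_sub, Prod.fst_add, Prod.snd_add,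
        Prod.smul_fst, Prod.smul_snd, smul_eq_mul]
      ring
    rw [e, div_mul_cancel₀ _ (by linarith)]
    ring
  have hseg := mem_segment_of_det2_eq_zero ha hb (ne_of_det2_sub_pos hD) hz hfz
  rw [segment_eq_image'] at hseg
  obtain ⟨t, ⟨ht₀, ht₁⟩, hzt⟩ := hseg
  have h₁ := congrArg Prod.fst hzt
  have h₂ := congrArg Prod.snd hzt
  simp only [Prod.fst_sub, Prod.snd_sub, Prod.fst_add, Prod.snd_add, Prod.smul_fst,
    Prod.smul_snd, smul_eq_mul] at h₁ h₂
  have e₁ : s * det2 (a - O) (w - O) = t * D := by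
    simp only [D, det2, Prod.fst_sub, Prod.snd_sub]
    linear_combination (a.2 - O.2) * h₁ - (a.1 - O.1) * h₂
  have e₂ : s * det2 (w - O) (b - O) = (1 - t) * D := by
    simp only [D, det2, Prod.fst_sub, Prod.snd_sub]
    linear_combination (b.1 - O.1) * h₂ - (b.2 - O.2) * h₁
  constructor <;> nlinarith

lemma mem_interior_of_det2_pos {O a b x : ℝ × ℝ} (hconv : Convex ℝ K) (hO : O ∈ interior K)
    (ha : a ∈ K) (hb : b ∈ K) (hD : 0 < det2 (a - O) (b - O))
    (h₁ : 0 ≤ det2 (a - O) (x - O)) (h₂ : 0 ≤ det2 (x - O) (b - O))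
    (hf : 0 < det2 (b - a) (x - a)) : x ∈ interior K := by
  set D := det2 (a - O) (b - O)
  set α := det2 (x - O) (b - O) / D
  set β := det2 (a - O) (x - O) / D
  have hα : 0 ≤ α := div_nonneg h₂ hD.le
  have hβ : 0 ≤ β := div_nonneg h₁ hD.le
  have hαβ : α + β < 1 := by
    rw [← add_div, div_lt_one hD]
    linarith [det2_sub_sub_eq O a b x]
  have hx : x = (1 - (α + β)) • O + (α • a + β • b) := by
    have := eq_det2_div_smul_add hD.ne' (x - O)
    rw [sub_eq_iff_eq_add] at this
    rw [this]
    module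
  rcases (add_nonneg hα hβ).eq_or_lt with h | h
  · have hα' : α = 0 := by linarith
    have hβ' : β = 0 := by linarith
    rw [hx, hα', hβ']
    simpa using hO
  · have hy : (α / (α + β)) • a + (β / (α + β)) • b ∈ K :=
      hconv ha hb (by positivity) (by positivity) (by field_simp)
    convert hconv.combo_interior_self_mem_interior hO hy (a := 1 - (α + β)) (b := α + β)
      (by linarith) h.le (by ring) using 1
    rw [hx, smul_add, smul_smul, smul_smul, mul_div_cancel₀ _ h.ne', mul_div_cancel₀ _ h.ne']

lemma mem_segment_of_notMem_interior {O a b x : ℝ × ℝ} (hconv : Convex ℝ K)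
    (hO : O ∈ interior K) (ha : a ∈ K.extremePoints ℝ) (hb : b ∈ K.extremePoints ℝ)
    (hD : 0 < det2 (a - O) (b - O)) (hK : ∀ y ∈ K, 0 ≤ det2 (b - a) (y - a))
    (hx : x ∈ K) (hxi : x ∉ interior K)
    (h₁ : 0 ≤ det2 (a - O) (x - O)) (h₂ : 0 ≤ det2 (x - O) (b - O)) : x ∈ segment ℝ a b := by
  rcases (hK x hx).eq_or_lt with h | h
  · exact mem_segment_of_det2_eq_zero ha hb (ne_of_det2_sub_pos hD) hx h.symm
  · exact absurd (mem_interior_of_det2_pos hconv hO ha.1 hb.1 hD h₁ h₂ h) hxi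

lemma segment_subset_frontier {a b : ℝ × ℝ} (hconv : Convex ℝ K) (hcl : IsClosed K)
    (ha : a ∈ K) (hb : b ∈ K) (hab : a ≠ b) (hK : ∀ y ∈ K, 0 ≤ det2 (b - a) (y - a)) :
    segment ℝ a b ⊆ frontier K := by
  intro x hx
  rw [hcl.frontier_eq]
  refine ⟨hconv.segment_subset ha hb hx, fun hint => ?_⟩
  have hpos := det2_pos_of_mem_interior (sub_ne_zero.2 hab.symm) hK hint
  rw [segment_eq_image'] at hx
  obtain ⟨t, -, rfl⟩ := hx
  rw [add_sub_cancel_left] at hpos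
  simp only [det2, Prod.smul_fst, Prod.smul_snd, smul_eq_mul] at hpos
  linarith

lemma injOn_polarAngle_sub {O : ℝ × ℝ} (hO : O ∈ interior K) :
    Set.InjOn (fun v => polarAngle (v - O)) (K.extremePoints ℝ) := by
  intro v hv w hw h
  have hOext := (disjoint_interior_extremePoints K).notMem_of_mem_left hO
  obtain ⟨t, ht, hwt⟩ := exists_pos_smul_of_polarAngle_eq
    (sub_ne_zero.2 (ne_of_mem_of_not_mem hv hOext))
    (sub_ne_zero.2 (ne_of_mem_of_not_mem hw hOext)) h
  exact eq_of_sub_eq_smul_sub hO hv hw ht hwt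

end ConvexGeometry

/-- `A` runs through `V` once counterclockwise around `O` per period: `Θ k` is an angle of
`A k - O`, not reduced mod `2π`, and it increases by exactly one full turn per period. -/
structure IsAngularEnumeration (O : ℝ × ℝ) (V : Set (ℝ × ℝ)) (p : ℕ) (A : ℤ → ℝ × ℝ)
    (Θ : ℤ → ℝ) : Prop where
  strictMono : StrictMono Θ
  angle_add_period : ∀ k, Θ (k + p) = Θ k + 2 * π
  periodic : Function.Periodic A p
  mem : ∀ k, A k ∈ V
  exists_eq : ∀ v ∈ V, ∃ k, A k = v
  polar : ∀ k, ∃ r : ℝ, 0 < r ∧ A k - O = r • dirVec (Θ k)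

namespace IsAngularEnumeration

variable {K V : Set (ℝ × ℝ)} {O : ℝ × ℝ} {p : ℕ} {A : ℤ → ℝ × ℝ} {Θ : ℤ → ℝ}

lemma eq_of_dvd (hA : IsAngularEnumeration O V p A Θ) {j k : ℤ} (h : (p : ℤ) ∣ k - j) :
    A k = A j := by
  obtain ⟨m, hm⟩ := h
  rw [show k = j + m * p by linarith]
  exact hA.periodic.int_mul m j

lemma angle_succ_sub_lt_pi (hA : IsAngularEnumeration O V p A Θ) (hKV : K ⊆ convexHull ℝ V)
    (hO : O ∈ interior K) (i : ℤ) : Θ (i + 1) - Θ i < π := by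
  refine _root_.angle_succ_sub_lt_pi hA.strictMono hA.angle_add_period (fun α => ?_) i
  obtain ⟨v, hv, hpos⟩ := exists_det2_pos_of_mem_interior hKV hO (dirVec_ne_zero α)
  obtain ⟨k, rfl⟩ := hA.exists_eq v hv
  obtain ⟨r, hr, hk⟩ := hA.polar k
  rw [hk, ← one_smul ℝ (dirVec α), det2_smul_dirVec_pos_iff one_pos hr] at hpos
  exact ⟨k, hpos⟩

lemma det2_succ_pos (hA : IsAngularEnumeration O V p A Θ) (hKV : K ⊆ convexHull ℝ V)
    (hO : O ∈ interior K) (i : ℤ) : 0 < det2 (A i - O) (A (i + 1) - O) := by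
  obtain ⟨r, hr, hi⟩ := hA.polar i
  obtain ⟨s, hs, hi'⟩ := hA.polar (i + 1)
  rw [hi, hi', det2_smul_dirVec_pos_iff hr hs]
  exact sin_pos_of_pos_of_lt_pi (sub_pos.2 (hA.strictMono (lt_add_one i)))
    (hA.angle_succ_sub_lt_pi hKV hO i)

variable (hconv : Convex ℝ K) (hKV : K ⊆ convexHull ℝ (K.extremePoints ℝ))
  (hO : O ∈ interior K) (hA : IsAngularEnumeration O (K.extremePoints ℝ) p A Θ)
include hconv hKV hO hA

lemma dvd_of_det2_nonpos {i k : ℤ} (h : det2 (A (i + 1) - A i) (A k - A i) ≤ 0) :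
    (p : ℤ) ∣ k - i ∨ (p : ℤ) ∣ k - (i + 1) := by
  obtain ⟨h₁, h₂⟩ := det2_nonneg_of_det2_nonpos hconv (interior_subset hO) (hA.mem i)
    (hA.mem (i + 1)) (hA.det2_succ_pos hKV hO i) (hA.mem k).1 h
  obtain ⟨r, hr, hi⟩ := hA.polar i
  obtain ⟨s, hs, hi'⟩ := hA.polar (i + 1)
  obtain ⟨t, ht, hk⟩ := hA.polar k
  rw [hi, hk, det2_smul_dirVec_nonneg_iff hr ht] at h₁
  rw [hk, hi', det2_smul_dirVec_nonneg_iff ht hs] at h₂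
  exact dvd_of_sin_nonneg hA.strictMono hA.angle_add_period h₁ h₂

lemma det2_nonneg (i : ℤ) {x : ℝ × ℝ} (hx : x ∈ K) : 0 ≤ det2 (A (i + 1) - A i) (x - A i) := by
  refine convexHull_min (fun v hv => ?_) (convex_det2_nonneg _ _) (hKV hx)
  obtain ⟨k, rfl⟩ := hA.exists_eq v hv
  by_contra h
  rcases hA.dvd_of_det2_nonpos hconv hKV hO (not_le.1 h).le with hd | hd <;>
    rw [hA.eq_of_dvd hd] at h <;> simp [det2, mul_comm] at h

lemma isCPD : IsCPD p A := by
  refine ⟨three_le_period hA.angle_add_period (hA.angle_succ_sub_lt_pi hKV hO), hA.periodic,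
    fun i q hi₀ hi₁ hq₀ hq₁ hqi hqi' => ?_⟩
  by_contra! h
  rcases hA.dvd_of_det2_nonpos hconv hKV hO h with hd | hd
  · exact hqi (by have := Int.eq_zero_of_abs_lt_dvd hd (abs_lt.2 ⟨by omega, by omega⟩); omega)
  · exact hqi' (by have := Int.eq_zero_of_abs_lt_dvd hd (abs_lt.2 ⟨by omega, by omega⟩); omega)

lemma frontier_eq_polyline (hcl : IsClosed K) : frontier K = Polyline p A := by
  ext x
  simp only [Polyline, Set.mem_iUnion, Finset.mem_range, exists_prop]
  constructor
  · intro hx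
    rw [hcl.frontier_eq] at hx
    obtain ⟨hxK, hxi⟩ := hx
    obtain ⟨ρ, hρ, hxρ⟩ :=
      exists_pos_eq_smul_dirVec (sub_ne_zero.2 fun (h : x = O) => hxi (by rwa [h]))
    obtain ⟨i, h₁, h₂⟩ := exists_sin_sub_nonneg hA.strictMono hA.angle_add_period
      (hA.angle_succ_sub_lt_pi hKV hO) (polarAngle (x - O))
    obtain ⟨r, hr, hi⟩ := hA.polar i
    obtain ⟨s, hs, hi'⟩ := hA.polar (i + 1)
    have hseg := mem_segment_of_notMem_interior hconv hO (hA.mem i) (hA.mem (i + 1))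
      (hA.det2_succ_pos hKV hO i) (fun y hy => hA.det2_nonneg hconv hKV hO i hy) hxK hxi
      (by rwa [hi, hxρ, det2_smul_dirVec_nonneg_iff hr hρ])
      (by rwa [hxρ, hi', det2_smul_dirVec_nonneg_iff hρ hs])
    have hp := period_pos hA.angle_add_period
    have hcast : (((i % p).toNat : ℕ) : ℤ) = i % p :=
      Int.toNat_of_nonneg (Int.emod_nonneg _ (by omega))
    refine ⟨(i % p).toNat, by have := Int.emod_lt_of_pos i (by omega : (0 : ℤ) < p); omega, ?_⟩
    have hdvd : (p : ℤ) ∣ i % p - i := dvd_sub_comm.1 Int.dvd_self_sub_emod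
    rwa [hcast, hA.eq_of_dvd hdvd,
      hA.eq_of_dvd (k := i % p + 1) (j := i + 1) (by rwa [add_sub_add_right_eq_sub])]
  · rintro ⟨k, -, hx⟩
    exact segment_subset_frontier hconv hcl (hA.mem k).1 (hA.mem (k + 1)).1
      (ne_of_det2_sub_pos (hA.det2_succ_pos hKV hO k))
      (fun y hy => hA.det2_nonneg hconv hKV hO k hy) hx

end IsAngularEnumeration

open scoped Fin.IntCast in
lemma isAngularEnumeration_of_fin {p : ℕ} [NeZero p] {O : ℝ × ℝ} {V : Set (ℝ × ℝ)}
    {θ : Fin p → ℝ} (hθ : StrictMono θ) (hθ₂π : ∀ i j, θ i < θ j + 2 * π) {v : Fin p → ℝ × ℝ}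
    (hv : ∀ i, v i ∈ V) (hsurj : ∀ w ∈ V, ∃ i, v i = w)
    (hpolar : ∀ i, ∃ r : ℝ, 0 < r ∧ v i - O = r • dirVec (θ i)) :
    IsAngularEnumeration O V p (fun k => v k) (fun k => θ k + (k / p : ℤ) * (2 * π)) := by
  have hp : (0 : ℤ) < p := Int.natCast_pos.2 (NeZero.pos p)
  have hcast_add : ∀ k : ℤ, ((k + p : ℤ) : Fin p) = (k : Fin p) := fun k =>
    Fin.ext (by simp only [Fin.val_intCast, Int.add_emod_right])
  refine ⟨strictMono_int_of_lt_succ fun k => ?_, fun k => ?_, fun k => by simp only [hcast_add],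
    fun k => hv _, fun w hw => ?_, fun k => ?_⟩
  · have h₀ := Int.emod_nonneg k hp.ne'
    have h₁ := Int.emod_lt_of_pos k hp
    have hk := Int.emod_add_ediv_mul k p
    rcases (show k % p + 1 < p ∨ k % p + 1 = p by omega) with hlt | heq
    · obtain ⟨hq, hr⟩ := (Int.ediv_emod_unique hp).2
        (⟨by linarith, by omega, hlt⟩ : k % p + 1 + p * (k / p) = k + 1 ∧ _ ∧ _)
      rw [hq]
      have : θ k < θ (k + 1 : ℤ) := hθ (Fin.lt_def.2 (by simp only [Fin.val_intCast]; omega))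
      linarith
    · obtain ⟨hq, hr⟩ := (Int.ediv_emod_unique hp).2
        (⟨by linarith, le_rfl, hp⟩ : 0 + p * (k / p + 1) = k + 1 ∧ _ ∧ _)
      rw [hq]
      push_cast
      linarith [hθ₂π k (k + 1 : ℤ)]
  · rw [hcast_add, show (k + p) / p = k / p + 1 by
      rw [← Int.add_mul_ediv_right k 1 hp.ne', one_mul]]
    push_cast
    ring
  · obtain ⟨i, rfl⟩ := hsurj w hw
    refine ⟨i, congrArg v (Fin.ext ?_)⟩
    rw [Fin.val_intCast, Int.emod_eq_of_lt (by positivity) (by exact_mod_cast i.isLt)]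
    simp
  · obtain ⟨r, hr, hvr⟩ := hpolar (k : Fin p)
    refine ⟨r, hr, ?_⟩
    rw [hvr]
    simp only [dirVec, cos_add_int_mul_two_pi, sin_add_int_mul_two_pi]

lemma exists_isAngularEnumeration {V : Set (ℝ × ℝ)} {O : ℝ × ℝ} (hV : V.Finite)
    (hne : V.Nonempty) (hO : O ∉ V) (hinj : Set.InjOn (fun v => polarAngle (v - O)) V) :
    ∃ p A Θ, IsAngularEnumeration O V p A Θ := by
  classical
  set S := hV.toFinset.image fun v => polarAngle (v - O)
  have : NeZero S.card := ⟨(Finset.card_pos.2 ((hV.toFinset_nonempty.2 hne).image _)).ne'⟩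
  set θ := S.orderEmbOfFin rfl
  have hθ : ∀ i, ∃ v ∈ V, polarAngle (v - O) = θ i := fun i => by
    obtain ⟨v, hv, h⟩ := Finset.mem_image.1 (S.orderEmbOfFin_mem rfl i)
    exact ⟨v, hV.mem_toFinset.1 hv, h⟩
  choose v hvV hvθ using hθ
  refine ⟨S.card, _, _, isAngularEnumeration_of_fin θ.strictMono (fun i j => ?_) hvV
    (fun w hw => ?_) (fun i => ?_)⟩
  · rw [← hvθ i, ← hvθ j]
    linarith [(polarAngle_mem_Ioc (v i - O)).2, (polarAngle_mem_Ioc (v j - O)).1, pi_pos]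
  · obtain ⟨i, hi⟩ : polarAngle (w - O) ∈ Set.range θ := by
      rw [Finset.range_orderEmbOfFin]
      exact Finset.mem_coe.2 (Finset.mem_image_of_mem _ (hV.mem_toFinset.2 hw))
    exact ⟨i, hinj (hvV i) hw (by simp only [hvθ, hi])⟩
  · obtain ⟨r, hr, h⟩ := exists_pos_eq_smul_dirVec (sub_ne_zero.2 (ne_of_mem_of_not_mem (hvV i) hO))
    exact ⟨r, hr, by rwa [hvθ] at h⟩

namespace IsClosedHalfPlane

variable {P : Set (ℝ × ℝ)}

lemma isClosed (hP : IsClosedHalfPlane P) : IsClosed P := by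
  obtain ⟨a, b, c, -, rfl⟩ := hP
  exact isClosed_le (by fun_prop) continuous_const

lemma convex (hP : IsClosedHalfPlane P) : Convex ℝ P := by
  obtain ⟨a, b, c, -, rfl⟩ := hP
  refine convex_halfSpace_le ⟨fun x y => ?_, fun t x => ?_⟩ c <;>
    simp only [Prod.fst_add, Prod.snd_add, Prod.smul_fst, Prod.smul_snd, smul_eq_mul] <;> ring

lemma eventually_add_smul_sub_mem (hP : IsClosedHalfPlane P) {x y : ℝ × ℝ} (hx : x ∈ P)
    (hy : y ∈ P) (hxy : x ∈ interior P ↔ y ∈ interior P) :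
    ∀ᶠ t in 𝓝 (0 : ℝ), x + t • (y - x) ∈ P := by
  by_cases hxi : x ∈ interior P
  · exact eventually_add_smul_mem_of_mem_interior hxi _
  obtain ⟨a, b, c, -, rfl⟩ := hP
  have hopen : {z : ℝ × ℝ | a * z.1 + b * z.2 < c} ⊆ interior {z | a * z.1 + b * z.2 ≤ c} :=
    interior_maximal (fun z hz => show a * z.1 + b * z.2 ≤ c from le_of_lt hz)
      (isOpen_lt (by fun_prop) continuous_const)
  have hx' : a * x.1 + b * x.2 = c := le_antisymm hx (not_lt.1 fun h => hxi (hopen h))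
  have hy' : a * y.1 + b * y.2 = c := le_antisymm hy (not_lt.1 fun h => hxi (hxy.2 (hopen h)))
  refine Eventually.of_forall fun t => ?_
  show a * (x + t • (y - x)).1 + b * (x + t • (y - x)).2 ≤ c
  refine le_of_eq ?_
  simp only [Prod.fst_add, Prod.snd_add, Prod.smul_fst, Prod.smul_snd, Prod.fst_sub,
    Prod.snd_sub, smul_eq_mul]
  linear_combination (1 - t) * hx' + t * hy'

end IsClosedHalfPlane

/-- An extreme point is determined by the set of half-planes on whose boundary it lies. -/
lemma finite_extremePoints_sInter {X : Set (Set (ℝ × ℝ))} (hX : X.Finite)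
    (hhp : ∀ P ∈ X, IsClosedHalfPlane P) : ((⋂₀ X).extremePoints ℝ).Finite := by
  refine Set.Finite.of_finite_image (f := fun x => {P ∈ X | x ∉ interior P})
    (hX.finite_subsets.subset ?_) fun x hx y hy hxy => ?_
  · rintro _ ⟨x, -, rfl⟩
    exact Set.sep_subset _ _
  have hev : ∀ᶠ t in 𝓝 (0 : ℝ), x + t • (y - x) ∈ ⋂₀ X := by
    simp only [Set.mem_sInter]
    refine (eventually_all_finite hX).2 fun P hP => (hhp P hP).eventually_add_smul_sub_mem
      (hx.1 P hP) (hy.1 P hP) ?_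
    have := congrArg (P ∈ ·) hxy
    simp only [Set.mem_sep_iff, eq_iff_iff] at this
    tauto
  obtain ⟨ε, hε, hball⟩ := Metric.eventually_nhds_iff.1 hev
  have hright := @hball (ε / 2)
    (by rw [dist_zero_right, Real.norm_eq_abs, abs_of_pos (by positivity)]; linarith)
  have hleft := @hball (-(ε / 2))
    (by rw [dist_zero_right, Real.norm_eq_abs, abs_neg, abs_of_pos (by positivity)]; linarith)
  rw [neg_smul, ← sub_eq_add_neg] at hleft
  have hx_eq := hx.2 hleft hright (mem_openSegment_sub_add _ _)
  rw [sub_eq_self, smul_eq_zero, sub_eq_zero] at hx_eq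
  exact (hx_eq.resolve_left (by positivity)).symm

/-- Every convex polygon has boundary the polygonal line of some CPD. -/
theorem PC_boundary_is_CPD (K : Set (ℝ × ℝ)) (hK : IsPC K) :
    ∃ p : ℕ, 3 ≤ p ∧ ∃ A : ℤ → ℝ × ℝ, IsCPD p A ∧
      frontier K = Polyline p A := by
  obtain ⟨⟨X, hX, hhp, rfl⟩, hbdd, O, hO⟩ := hK
  have hconv : Convex ℝ (⋂₀ X) := convex_sInter fun P hP => (hhp P hP).convex
  have hcl : IsClosed (⋂₀ X) := isClosed_sInter fun P hP => (hhp P hP).isClosed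
  have hfin := finite_extremePoints_sInter hX hhp
  have hKV : convexHull ℝ ((⋂₀ X).extremePoints ℝ) = ⋂₀ X := by
    rw [← (hfin.isCompact_convexHull (𝕜 := ℝ)).isClosed.closure_eq]
    exact closure_convexHull_extremePoints
      (Metric.isCompact_of_isClosed_isBounded hcl hbdd) hconv
  have hne : ((⋂₀ X).extremePoints ℝ).Nonempty :=
    (convexHull_nonempty_iff (𝕜 := ℝ)).1 (by rw [hKV]; exact ⟨O, interior_subset hO⟩)
  obtain ⟨p, A, Θ, hA⟩ := exists_isAngularEnumeration hfin hne
    ((disjoint_interior_extremePoints _).notMem_of_mem_left hO) (injOn_polarAngle_sub hO)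
  have hCPD := hA.isCPD hconv hKV.ge hO
  exact ⟨p, hCPD.1, A, hCPD, hA.frontier_eq_polyline hconv hKV.ge hO hcl⟩
end
end
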